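/- arXiv:1704.06906 — 9 statements merged into one kernel-verified Lean document; each statement's English description precedes it below -/
import Mathlib

section
/- For a countable group G the following are equivalent: (i) there exist d : ℕ → ℕ and maps α_m : G → U(d m) such that for all g, h ∈ G, ‖α_m(gh) − α_m(g)α_m(h)‖ → 0 as m → ∞, and for every g ∈ G with g ≠ 1, ‖α_m(g) − 1‖ does not converge to 0; (ii) for every finite subset F ⊆ G there exists δ > 0 such that for every ε > 0 there exist n ∈ ℕ and a map α : G → U(n) with ‖α(gh) − α(g)α(h)‖ < ε for all g, h ∈ F and ‖α(g) − 1‖ > δ for every g ∈ F with g ≠ 1. -/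
/-!
(i) ⇒ (ii): given a finite `F`, every `g ∈ F \ {1}` has some `δ_g > 0` with
`‖α_m(g) - 1‖ > δ_g` for infinitely many `m`. Take `δ` below all `δ_g` and, for each `g`, one
such `m` so far out that `α_m` is `ε`-multiplicative on `F`; the direct sum of these `α_m` works,
because the norm of a block-diagonal matrix is the largest norm of its blocks.

(ii) ⇒ (i): first boost the separation constant `δ` to `1`. If `‖u - 1‖ > δ` for a unitary `u`,
then `u` has an eigenvalue `μ` with `|μ - 1| > δ`, and some power `μ^k` with `k ≤ ⌈π / 2δ⌉` has
nonpositive real part, so `|μ^k - 1| > 1`; `μ^k` is an eigenvalue of the tensor power `u^{⊗k}`.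
The multiplicative defect of `α^{⊗k}` is at most `k` times that of `α`, so the direct sum of the
`α^{⊗k}`, `k ≤ ⌈π / 2δ⌉`, is almost multiplicative and `1`-separating on `F`. Enumerating `G` and
taking such maps on its first `m` elements with defect `< 1 / (m + 1)` gives the sequence in (i).

All norm estimates come from star-algebra homomorphisms between C⋆-algebras being contractive,
and isometric when injective.
-/

open Filter

/-- The operator norm (as operators on `ℂⁿ` with the `ℓ²` norm) of a complex matrix. -/
noncomputable def matOpNorm {N : Type*} [Fintype N] [DecidableEq N]
    (A : Matrix N N ℂ) : ℝ :=
  ‖Matrix.toEuclideanCLM (𝕜 := ℂ) (n := N) A‖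

lemma CStarRing.norm_coe_unitary_le {E : Type*} [NormedRing E] [StarRing E] [CStarRing E]
    (U : unitary E) : ‖(U : E)‖ ≤ 1 := by
  rcases subsingleton_or_nontrivial E with _ | _
  · simp [Subsingleton.elim (U : E) 0]
  · exact (CStarRing.norm_coe_unitary U).le

lemma exists_mem_spectrum_lt_norm_sub_one {A : Type*} [CStarAlgebra A] {u : A}
    (hu : u ∈ unitary A) {δ : ℝ} (hδ : 0 ≤ δ) (h : δ < ‖u - 1‖) :
    ∃ μ ∈ spectrum ℂ u, δ < ‖μ - 1‖ := by
  have : Nontrivial A := by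
    by_contra hA
    rw [not_nontrivial_iff_subsingleton] at hA
    simp [Subsingleton.elim (u - 1) 0] at h
    linarith
  have := isStarNormal_of_mem_unitary hu
  obtain ⟨ν, hν, hνr⟩ :=
    spectrum.exists_nnnorm_eq_spectralRadius_of_nonempty (spectrum.nonempty (1 - u))
  rw [IsStarNormal.spectralRadius_eq_nnnorm, ENNReal.coe_inj] at hνr
  rw [← map_one (algebraMap ℂ A), ← spectrum.singleton_sub_eq] at hν
  obtain ⟨_, rfl, μ, hμ, rfl⟩ := hν
  refine ⟨μ, hμ, ?_⟩
  rwa [norm_sub_rev, ← coe_nnnorm, hνr, coe_nnnorm, norm_sub_rev]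

namespace Complex

open Real

lemma one_lt_norm_exp_I_mul_ofReal_sub_one {x : ℝ} (hx : Real.cos x ≤ 0) :
    1 < ‖exp (I * x) - 1‖ := by
  have hsin : 1 / 2 ≤ Real.sin (x / 2) ^ 2 := by
    have := Real.cos_two_mul_eq_one_sub (x / 2)
    rw [mul_div_cancel₀ x two_ne_zero] at this
    linarith
  rw [norm_exp_I_mul_ofReal_sub_one, norm_mul, Real.norm_eq_abs, Real.norm_eq_abs, abs_two]
  nlinarith [abs_nonneg (Real.sin (x / 2)), sq_abs (Real.sin (x / 2))]

lemma exists_le_ceil_one_lt_norm_pow_sub_one {μ : ℂ} (hμ : ‖μ‖ = 1) {δ : ℝ} (hδ : 0 < δ)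
    (h : δ < ‖μ - 1‖) : ∃ k ≤ ⌈π / (2 * δ)⌉₊, 1 < ‖μ ^ k - 1‖ := by
  set θ := μ.arg
  have hμθ : μ = exp (I * θ) := by
    simpa [hμ, mul_comm] using (norm_mul_exp_arg_mul_I μ).symm
  have hδθ : δ < |θ| :=
    h.trans_le (by rw [hμθ, ← Real.norm_eq_abs]; exact norm_exp_I_mul_ofReal_sub_one_le)
  have hθ : 0 < |θ| := hδ.trans hδθ
  set k := ⌈π / (2 * |θ|)⌉₊
  have hlo : π / 2 ≤ k * |θ| := by
    have := Nat.le_ceil (π / (2 * |θ|))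
    rw [div_le_iff₀ (by positivity)] at this
    linarith
  have hhi : k * |θ| ≤ π + π / 2 := by
    have := Nat.ceil_lt_add_one (div_nonneg pi_pos.le (by positivity) : 0 ≤ π / (2 * |θ|))
    rw [← sub_lt_iff_lt_add, lt_div_iff₀ (by positivity)] at this
    linarith [abs_arg_le_pi μ]
  refine ⟨k, Nat.ceil_mono (by gcongr), ?_⟩
  have hcos : Real.cos (k * θ) ≤ 0 := by
    rw [← Real.cos_abs, abs_mul, Nat.abs_cast]
    exact cos_nonpos_of_pi_div_two_le_of_le hlo hhi
  rw [hμθ, ← exp_nat_mul, ← mul_assoc, mul_comm (k : ℂ), mul_assoc]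
  exact_mod_cast one_lt_norm_exp_I_mul_ofReal_sub_one hcos

end Complex

namespace Matrix

open scoped Kronecker

section TensorPow

variable {n : Type*} {R : Type*}

def tensorPow [CommMonoid R] (A : Matrix n n R) (k : ℕ) : Matrix (Fin k → n) (Fin k → n) R :=
  of fun f g => ∏ j, A (f j) (g j)

@[simp]
lemma tensorPow_apply [CommMonoid R] (A : Matrix n n R) (k : ℕ) (f g : Fin k → n) :
    tensorPow A k f g = ∏ j, A (f j) (g j) := rfl

def tensorPowVec [CommMonoid R] (x : n → R) (k : ℕ) : (Fin k → n) → R :=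
  fun f => ∏ j, x (f j)

lemma tensorPowVec_ne_zero [CommMonoidWithZero R] [NoZeroDivisors R] [Nontrivial R] {x : n → R}
    (hx : x ≠ 0) (k : ℕ) : tensorPowVec x k ≠ 0 := by
  obtain ⟨i, hi⟩ := Function.ne_iff.1 hx
  refine Function.ne_iff.2 ⟨fun _ => i, ?_⟩
  simpa [tensorPowVec] using pow_ne_zero k hi

variable [CommSemiring R]

lemma tensorPow_one [DecidableEq n] (k : ℕ) : tensorPow (1 : Matrix n n R) k = 1 := by
  ext f g
  by_cases hfg : f = g
  · subst hfg; simp [one_apply_eq]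
  · obtain ⟨j, hj⟩ := Function.ne_iff.1 hfg
    rw [tensorPow_apply, one_apply_ne hfg]
    exact Finset.prod_eq_zero (Finset.mem_univ j) (one_apply_ne hj)

lemma tensorPow_succ (A : Matrix n n R) (k : ℕ) :
    tensorPow A (k + 1) =
      reindex (Fin.consEquiv fun _ => n) (Fin.consEquiv fun _ => n) (A ⊗ₖ tensorPow A k) := by
  ext f g
  simp [Fin.prod_univ_succ, Fin.consEquiv, Fin.tail]

lemma conjTranspose_tensorPow [StarRing R] (A : Matrix n n R) (k : ℕ) :
    (tensorPow A k)ᴴ = tensorPow Aᴴ k := by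
  ext f g
  simp [star_prod]

variable [Fintype n]

lemma tensorPow_mul (A B : Matrix n n R) (k : ℕ) :
    tensorPow (A * B) k = tensorPow A k * tensorPow B k := by
  ext f g
  simp only [tensorPow_apply, mul_apply, Fintype.prod_sum, ← Finset.prod_mul_distrib]

lemma tensorPow_mulVec_tensorPowVec {A : Matrix n n R} {x : n → R} {μ : R}
    (h : A *ᵥ x = μ • x) (k : ℕ) :
    tensorPow A k *ᵥ tensorPowVec x k = μ ^ k • tensorPowVec x k := by
  ext f
  have hf : ∏ j, (A *ᵥ x) (f j) = μ ^ k * ∏ j, x (f j) := by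
    simp [h, Finset.prod_mul_distrib]
  simpa only [mulVec, dotProduct, tensorPow_apply, tensorPowVec, ← Finset.prod_mul_distrib,
    Fintype.prod_sum, Pi.smul_apply, smul_eq_mul] using hf

variable [DecidableEq n]

def tensorPowStarMonoidHom [StarRing R] (k : ℕ) :
    Matrix n n R →⋆* Matrix (Fin k → n) (Fin k → n) R where
  toFun A := tensorPow A k
  map_one' := tensorPow_one k
  map_mul' A B := tensorPow_mul A B k
  map_star' A := (conjTranspose_tensorPow A k).symm

end TensorPow

section StarAlgHom

variable (R : Type*) [CommSemiring R] [StarRing R]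
variable (m n : Type*) [Fintype m] [DecidableEq m] [Fintype n] [DecidableEq n]

def kroneckerOneStarAlgHom : Matrix m m R →⋆ₐ[R] Matrix (m × n) (m × n) R where
  toFun A := A ⊗ₖ 1
  map_one' := one_kronecker_one
  map_mul' A B := by rw [← mul_kronecker_mul, mul_one]
  map_zero' := zero_kronecker _
  map_add' A B := add_kronecker A B 1
  commutes' r := by
    simp only [Algebra.algebraMap_eq_smul_one, smul_kronecker, one_kronecker_one]
  map_star' A := by
    simp only [star_eq_conjTranspose, conjTranspose_kronecker, conjTranspose_one]

def oneKroneckerStarAlgHom : Matrix n n R →⋆ₐ[R] Matrix (m × n) (m × n) R where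
  toFun B := 1 ⊗ₖ B
  map_one' := one_kronecker_one
  map_mul' A B := by rw [← mul_kronecker_mul, mul_one]
  map_zero' := kronecker_zero _
  map_add' A B := kronecker_add 1 A B
  commutes' r := by
    simp only [Algebra.algebraMap_eq_smul_one, kronecker_smul, one_kronecker_one]
  map_star' A := by
    simp only [star_eq_conjTranspose, conjTranspose_kronecker, conjTranspose_one]

variable {m n} in
def reindexStarAlgEquiv (e : m ≃ n) : Matrix m m R ≃⋆ₐ[R] Matrix n n R :=
  { reindexAlgEquiv R R e with
    map_smul' _ _ := rfl
    map_star' A := (conjTranspose_reindex e e A).symm }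

variable {ι : Type*} [Fintype ι] [DecidableEq ι] (p : ι → Type*) [∀ i, Fintype (p i)]
  [∀ i, DecidableEq (p i)]

def blockDiagonal'StarAlgHom : (∀ i, Matrix (p i) (p i) R) →⋆ₐ[R] Matrix (Σ i, p i) (Σ i, p i) R :=
  { blockDiagonal'RingHom p R with
    commutes' r := by
      simp only [Algebra.algebraMap_eq_smul_one, RingHom.toMonoidHom_eq_coe, OneHom.toFun_eq_coe,
        MonoidHom.toOneHom_coe, MonoidHom.coe_coe, blockDiagonal'RingHom_apply,
        blockDiagonal'_smul, blockDiagonal'_one]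
    map_star' M := (blockDiagonal'_conjTranspose M).symm }

variable {R p} in
lemma exists_injective_starAlgHom_pi :
    ∃ (N : ℕ) (φ : (∀ i, Matrix (p i) (p i) R) →⋆ₐ[R] Matrix (Fin N) (Fin N) R),
      Function.Injective φ :=
  let e := reindexStarAlgEquiv R (Fintype.equivFin (Σ i, p i))
  ⟨_, e.toStarAlgHom.comp (blockDiagonal'StarAlgHom R p),
    (EquivLike.injective e).comp blockDiagonal'_injective⟩

end StarAlgHom

section L2OpNorm

open scoped Matrix.Norms.L2Operator

variable {m n : Type*} [Fintype m] [DecidableEq m] [Fintype n] [DecidableEq n]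

lemma l2_opNorm_kronecker_le (A : Matrix m m ℂ) (B : Matrix n n ℂ) : ‖A ⊗ₖ B‖ ≤ ‖A‖ * ‖B‖ :=
  calc ‖A ⊗ₖ B‖ = ‖kroneckerOneStarAlgHom ℂ m n A * oneKroneckerStarAlgHom ℂ m n B‖ := by
        change ‖A ⊗ₖ B‖ = ‖A ⊗ₖ 1 * 1 ⊗ₖ B‖
        rw [← mul_kronecker_mul, mul_one, one_mul]
    _ ≤ ‖kroneckerOneStarAlgHom ℂ m n A‖ * ‖oneKroneckerStarAlgHom ℂ m n B‖ := norm_mul_le _ _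
    _ ≤ ‖A‖ * ‖B‖ := mul_le_mul (NonUnitalStarAlgHom.norm_apply_le _ A)
        (NonUnitalStarAlgHom.norm_apply_le _ B) (norm_nonneg _) (norm_nonneg _)

lemma l2_opNorm_reindex (e : m ≃ n) (A : Matrix m m ℂ) : ‖reindex e e A‖ = ‖A‖ :=
  StarAlgEquiv.norm_map (reindexStarAlgEquiv ℂ e) A

lemma l2_opNorm_tensorPow_sub_le {U V : Matrix n n ℂ} (hU : U ∈ unitaryGroup n ℂ)
    (hV : V ∈ unitaryGroup n ℂ) (k : ℕ) :
    ‖tensorPow U k - tensorPow V k‖ ≤ k * ‖U - V‖ := by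
  induction k with
  | zero => simp [show tensorPow U 0 = tensorPow V 0 by ext; simp]
  | succ k ih =>
    have hsplit : tensorPow U (k + 1) - tensorPow V (k + 1) =
        reindex (Fin.consEquiv fun _ => n) (Fin.consEquiv fun _ => n)
          (U ⊗ₖ (tensorPow U k - tensorPow V k) + (U - V) ⊗ₖ tensorPow V k) := by
      ext
      simp only [tensorPow_succ, reindex_apply, submatrix_apply, sub_apply, add_apply,
        kroneckerMap_apply]
      ring
    have hU1 : ‖U‖ ≤ 1 := CStarRing.norm_coe_unitary_le ⟨U, hU⟩
    have hV1 : ‖tensorPow V k‖ ≤ 1 :=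
      CStarRing.norm_coe_unitary_le ⟨_, Unitary.map_mem (tensorPowStarMonoidHom k) hV⟩
    rw [hsplit, l2_opNorm_reindex]
    calc _ ≤ ‖U‖ * ‖tensorPow U k - tensorPow V k‖ + ‖U - V‖ * ‖tensorPow V k‖ :=
          norm_add_le_of_le (l2_opNorm_kronecker_le _ _) (l2_opNorm_kronecker_le _ _)
      _ ≤ 1 * (k * ‖U - V‖) + ‖U - V‖ * 1 := by gcongr
      _ = (k + 1 : ℕ) * ‖U - V‖ := by push_cast; ring

lemma exists_mulVec_eq_smul_of_mem_spectrum {K : Type*} [Field K] {A : Matrix n n K} {μ : K}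
    (h : μ ∈ spectrum K A) : ∃ x ≠ 0, A *ᵥ x = μ • x := by
  rw [← spectrum_toLin', ← Module.End.hasEigenvalue_iff_mem_spectrum] at h
  obtain ⟨x, hx⟩ := h.exists_hasEigenvector
  exact ⟨x, hx.2, by simpa using hx.apply_eq_smul⟩

lemma norm_le_l2_opNorm_of_mulVec_eq_smul {B : Matrix n n ℂ} {x : n → ℂ} {c : ℂ} (hx : x ≠ 0)
    (h : B *ᵥ x = c • x) : ‖c‖ ≤ ‖B‖ := by
  have hc : c ∈ spectrum ℂ B := by
    rw [← spectrum_toLin']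
    exact (Module.End.hasEigenvalue_of_hasEigenvector
      ⟨Module.End.mem_eigenspace_iff.2 (by simpa using h), hx⟩).mem_spectrum
  have : Nonempty n := by
    obtain ⟨i, -⟩ := Function.ne_iff.1 hx
    exact ⟨i⟩
  exact spectrum.norm_le_norm_of_mem hc

lemma exists_one_lt_l2_opNorm_tensorPow_sub_one {u : Matrix n n ℂ} (hu : u ∈ unitaryGroup n ℂ)
    {δ : ℝ} (hδ : 0 < δ) (h : δ < ‖u - 1‖) :
    ∃ k ≤ ⌈Real.pi / (2 * δ)⌉₊, 1 < ‖tensorPow u k - 1‖ := by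
  obtain ⟨μ, hμ, hμδ⟩ := exists_mem_spectrum_lt_norm_sub_one hu hδ.le h
  obtain ⟨k, hk, hμk⟩ := Complex.exists_le_ceil_one_lt_norm_pow_sub_one
    (spectrum.norm_eq_one_of_unitary hu hμ) hδ hμδ
  obtain ⟨x, hx, hux⟩ := exists_mulVec_eq_smul_of_mem_spectrum hμ
  refine ⟨k, hk, hμk.trans_le (norm_le_l2_opNorm_of_mulVec_eq_smul (tensorPowVec_ne_zero hx k) ?_)⟩
  rw [sub_mulVec, tensorPow_mulVec_tensorPowVec hux, one_mulVec, sub_smul, one_smul]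

end L2OpNorm

end Matrix

open Matrix
open scoped Matrix.Norms.L2Operator Topology

lemma exists_pos_forall_frequently_lt {κ ι : Type*} {l : Filter ι} {f : κ → ι → ℝ}
    (hf : ∀ k i, 0 ≤ f k i) {S : Finset κ} (h : ∀ k ∈ S, ¬Tendsto (f k) l (𝓝 0)) :
    ∃ δ > 0, ∀ k ∈ S, ∃ᶠ i in l, δ < f k i := by
  have hS : ∀ k ∈ S, ∀ᶠ δ in 𝓝[>] (0 : ℝ), ∃ᶠ i in l, δ < f k i := by
    intro k hk
    obtain ⟨c, hc, hfc⟩ : ∃ c > 0, ∃ᶠ i in l, c ≤ f k i := by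
      simpa [Metric.tendsto_nhds, Real.dist_eq, abs_of_nonneg (hf k _)] using h k hk
    filter_upwards [Ioo_mem_nhdsGT hc] with δ hδ
    exact hfc.mono fun i hi => hδ.2.trans_le hi
  obtain ⟨δ, hδ, hpos⟩ := (((eventually_all_finset S).2 hS).and self_mem_nhdsWithin).exists
  exact ⟨δ, hpos, hδ⟩

def unitaryPi {ι : Type*} {A : ι → Type*} [∀ i, Monoid (A i)] [∀ i, StarMul (A i)]
    (u : ∀ i, unitary (A i)) : unitary (∀ i, A i) :=
  ⟨fun i => u i, Unitary.mem_iff.2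
    ⟨funext fun i => Unitary.star_mul_self_of_mem (u i).2,
      funext fun i => Unitary.mul_star_self_of_mem (u i).2⟩⟩

section ApproximateRepresentation

variable {G : Type*} [Group G]

def IsAlmostMulOn {A : Type*} [NormedRing A] [StarRing A] (F : Finset G) (ε : ℝ)
    (α : G → unitary A) : Prop :=
  ∀ g ∈ F, ∀ h ∈ F, ‖(α (g * h) : A) - α g * α h‖ < ε

def IsSeparatingOn {A : Type*} [NormedRing A] [StarRing A] (F : Finset G) (δ : ℝ)
    (α : G → unitary A) : Prop :=
  ∀ g ∈ F, g ≠ 1 → δ < ‖(α g : A) - 1‖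

variable {A B : Type*} [CStarAlgebra A] [CStarAlgebra B] {F : Finset G} {ε δ : ℝ}

lemma IsAlmostMulOn.map {α : G → unitary A} (h : IsAlmostMulOn F ε α) (φ : A →⋆ₐ[ℂ] B) :
    IsAlmostMulOn F ε (Unitary.map (StarMonoidHom.ofClass φ) ∘ α) := fun g hg g' hg' =>
  calc _ = ‖φ ((α (g * g') : A) - α g * α g')‖ := by simp
    _ ≤ _ := NonUnitalStarAlgHom.norm_apply_le φ _
    _ < ε := h g hg g' hg'

lemma IsSeparatingOn.map {α : G → unitary A} (h : IsSeparatingOn F δ α) {φ : A →⋆ₐ[ℂ] B}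
    (hφ : Function.Injective φ) :
    IsSeparatingOn F δ (Unitary.map (StarMonoidHom.ofClass φ) ∘ α) := fun g hg hg1 =>
  calc δ < ‖(α g : A) - 1‖ := h g hg hg1
    _ = ‖φ ((α g : A) - 1)‖ := (NonUnitalStarAlgHom.norm_map φ hφ _).symm
    _ = _ := by rw [map_sub, map_one]; rfl

variable {ι : Type*} [Fintype ι]

lemma isAlmostMulOn_unitaryPi {A : ι → Type*} [∀ i, CStarAlgebra (A i)]
    {α : ∀ i, G → unitary (A i)} (hε : 0 < ε) (h : ∀ i, IsAlmostMulOn F ε (α i)) :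
    IsAlmostMulOn F ε fun g => unitaryPi fun i => α i g := fun g hg g' hg' =>
  (pi_norm_lt_iff hε).2 fun i => h i g hg g' hg'

lemma isSeparatingOn_unitaryPi {A : ι → Type*} [∀ i, CStarAlgebra (A i)]
    {α : ∀ i, G → unitary (A i)} (h : ∀ g ∈ F, g ≠ 1 → ∃ i, δ < ‖(α i g : A i) - 1‖) :
    IsSeparatingOn F δ fun g => unitaryPi fun i => α i g := fun g hg hg1 =>
  let ⟨i, hi⟩ := h g hg hg1
  hi.trans_le (norm_le_pi_norm ((unitaryPi fun i => α i g : ∀ i, A i) - 1) i)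

end ApproximateRepresentation

section Equivalence

variable {G : Type*} [Group G] {F : Finset G} {ε δ : ℝ}

lemma IsAlmostMulOn.tensorPow {n : Type*} [Fintype n] [DecidableEq n]
    {α : G → unitaryGroup n ℂ} (h : IsAlmostMulOn F ε α) {k K : ℕ} (hk : k ≤ K) (hK : 0 < K) :
    IsAlmostMulOn F (K * ε) (Unitary.map (tensorPowStarMonoidHom k) ∘ α) := fun g hg g' hg' =>
  calc ‖Matrix.tensorPow (α (g * g')) k - Matrix.tensorPow (α g) k * Matrix.tensorPow (α g') k‖
      = ‖Matrix.tensorPow (α (g * g')) k - Matrix.tensorPow (α g * α g' : Matrix n n ℂ) k‖ := by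
        rw [tensorPow_mul]
    _ ≤ k * ‖(α (g * g') : Matrix n n ℂ) - α g * α g'‖ :=
        l2_opNorm_tensorPow_sub_le (α _).2 (α g * α g').2 k
    _ ≤ K * ‖(α (g * g') : Matrix n n ℂ) - α g * α g'‖ := by gcongr
    _ < K * ε := by gcongr; exact h g hg g' hg'

theorem exists_fin_of_directSum {ι : Type*} [Fintype ι] {p : ι → Type*} [∀ i, Fintype (p i)]
    [∀ i, DecidableEq (p i)] (α : ∀ i, G → unitaryGroup (p i) ℂ) (hε : 0 < ε)
    (hmul : ∀ i, IsAlmostMulOn F ε (α i))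
    (hsep : ∀ g ∈ F, g ≠ 1 → ∃ i, δ < ‖(α i g : Matrix (p i) (p i) ℂ) - 1‖) :
    ∃ (n : ℕ) (β : G → unitaryGroup (Fin n) ℂ), IsAlmostMulOn F ε β ∧ IsSeparatingOn F δ β := by
  classical
  obtain ⟨N, φ, hφ⟩ := exists_injective_starAlgHom_pi (R := ℂ) (p := p)
  exact ⟨N, _, (isAlmostMulOn_unitaryPi hε hmul).map φ, (isSeparatingOn_unitaryPi hsep).map hφ⟩

theorem exists_isSeparatingOn_one (hδ : 0 < δ)
    (H : ∀ ε > 0, ∃ (n : ℕ) (α : G → unitaryGroup (Fin n) ℂ),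
      IsAlmostMulOn F ε α ∧ IsSeparatingOn F δ α) (hε : 0 < ε) :
    ∃ (n : ℕ) (β : G → unitaryGroup (Fin n) ℂ), IsAlmostMulOn F ε β ∧ IsSeparatingOn F 1 β := by
  set K := ⌈Real.pi / (2 * δ)⌉₊
  have hK : 0 < K := Nat.ceil_pos.2 (by positivity)
  obtain ⟨n, α, hmul, hsep⟩ := H (ε / K) (by positivity)
  refine exists_fin_of_directSum (fun k : Fin (K + 1) => Unitary.map (tensorPowStarMonoidHom k) ∘ α)
    hε (fun k => ?_) fun g hg hg1 => ?_
  · simpa [mul_div_cancel₀ ε (Nat.cast_ne_zero.2 hK.ne')] using hmul.tensorPow k.is_le hK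
  · obtain ⟨k, hk, h1⟩ := exists_one_lt_l2_opNorm_tensorPow_sub_one (α g).2 hδ (hsep g hg hg1)
    exact ⟨⟨k, Nat.lt_succ_of_le hk⟩, h1⟩

theorem forall_finset_of_tendsto {p : ℕ → Type*} [∀ m, Fintype (p m)] [∀ m, DecidableEq (p m)]
    (a : ∀ m, G → unitaryGroup (p m) ℂ)
    (hmul : ∀ g h, Tendsto (fun m => ‖(a m (g * h) : Matrix (p m) (p m) ℂ) - a m g * a m h‖)
      atTop (𝓝 0))
    (hsep : ∀ g, g ≠ 1 → ¬Tendsto (fun m => ‖(a m g : Matrix (p m) (p m) ℂ) - 1‖) atTop (𝓝 0))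
    (F : Finset G) :
    ∃ δ > 0, ∀ ε > 0, ∃ (n : ℕ) (β : G → unitaryGroup (Fin n) ℂ),
      IsAlmostMulOn F ε β ∧ IsSeparatingOn F δ β := by
  classical
  obtain ⟨δ, hδ, hfreq⟩ := exists_pos_forall_frequently_lt
    (fun g m => norm_nonneg ((a m g : Matrix (p m) (p m) ℂ) - 1)) (S := F.filter (· ≠ 1))
    fun g hg => hsep g (Finset.mem_filter.1 hg).2
  refine ⟨δ, hδ, fun ε hε => ?_⟩
  have hev : ∀ᶠ m in atTop, IsAlmostMulOn F ε (a m) := by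
    simp only [IsAlmostMulOn, eventually_all_finset]
    exact fun g _ h _ => (hmul g h).eventually (gt_mem_nhds hε)
  have hm : ∀ g : F, ∃ m, IsAlmostMulOn F ε (a m) ∧
      (g.1 ≠ 1 → δ < ‖(a m g : Matrix (p m) (p m) ℂ) - 1‖) := by
    rintro ⟨g, hg⟩
    by_cases hg1 : g = 1
    · obtain ⟨m, hm⟩ := hev.exists
      exact ⟨m, hm, fun h => (h hg1).elim⟩
    · obtain ⟨m, hm, hδm⟩ := ((hfreq g (by simp [hg, hg1])).and_eventually hev).exists
      exact ⟨m, hδm, fun _ => hm⟩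
  choose m hm using hm
  exact exists_fin_of_directSum (fun g => a (m g)) hε (fun g => (hm g).1)
    fun g hg hg1 => ⟨⟨g, hg⟩, (hm _).2 hg1⟩

theorem exists_tendsto_of_forall_finset [Countable G] {ι : Type*} {A : ι → Type*}
    [∀ i, NormedRing (A i)] [∀ i, StarRing (A i)]
    (H : ∀ (F : Finset G) (ε : ℝ), 0 < ε →
      ∃ (i : ι) (α : G → unitary (A i)), IsAlmostMulOn F ε α ∧ IsSeparatingOn F 1 α) :
    ∃ (d : ℕ → ι) (α : ∀ m, G → unitary (A (d m))),
      (∀ g h, Tendsto (fun m => ‖(α m (g * h) : A (d m)) - α m g * α m h‖) atTop (𝓝 0)) ∧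
      ∀ g, g ≠ 1 → ¬Tendsto (fun m => ‖(α m g : A (d m)) - 1‖) atTop (𝓝 0) := by
  classical
  obtain ⟨e, he⟩ := exists_surjective_nat G
  have hF : ∀ g, ∀ᶠ m in atTop, g ∈ (Finset.range m).image e := fun g => by
    obtain ⟨i, rfl⟩ := he g
    filter_upwards [eventually_gt_atTop i] with m hm
    exact Finset.mem_image_of_mem e (Finset.mem_range.2 hm)
  choose d α hmul hsep using fun m : ℕ =>
    H ((Finset.range m).image e) (1 / (m + 1)) Nat.one_div_pos_of_nat
  refine ⟨d, α, fun g h => ?_, fun g hg hlim => ?_⟩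
  · refine squeeze_zero' (.of_forall fun m => norm_nonneg _) ?_
      tendsto_one_div_add_atTop_nhds_zero_nat
    filter_upwards [hF g, hF h] with m hgm hhm using (hmul m g hgm h hhm).le
  · obtain ⟨m, hm, hgm⟩ := ((hlim.eventually (gt_mem_nhds one_pos)).and (hF g)).exists
    exact (hsep m g hgm hg).asymm hm

end Equivalence

theorem stmt0 (G : Type*) [Group G] [Countable G] :
    (∃ (d : ℕ → ℕ) (α : ∀ m : ℕ, G → Matrix.unitaryGroup (Fin (d m)) ℂ),
      (∀ g h : G,
        Tendsto (fun m : ℕ =>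
          matOpNorm ((α m (g * h) : Matrix (Fin (d m)) (Fin (d m)) ℂ) -
            (α m g : Matrix (Fin (d m)) (Fin (d m)) ℂ) *
            (α m h : Matrix (Fin (d m)) (Fin (d m)) ℂ)))
          atTop (nhds 0)) ∧
      (∀ g : G, g ≠ 1 →
        ¬ Tendsto (fun m : ℕ =>
            matOpNorm ((α m g : Matrix (Fin (d m)) (Fin (d m)) ℂ) - 1))
          atTop (nhds 0)))
    ↔
    (∀ F : Finset G, ∃ δ > (0 : ℝ), ∀ ε > (0 : ℝ),
      ∃ (n : ℕ) (α : G → Matrix.unitaryGroup (Fin n) ℂ),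
        (∀ g ∈ F, ∀ h ∈ F,
          matOpNorm ((α (g * h) : Matrix (Fin n) (Fin n) ℂ) -
            (α g : Matrix (Fin n) (Fin n) ℂ) * (α h : Matrix (Fin n) (Fin n) ℂ)) < ε) ∧
        (∀ g ∈ F, g ≠ 1 →
          matOpNorm ((α g : Matrix (Fin n) (Fin n) ℂ) - 1) > δ)) := by
  constructor
  · rintro ⟨d, a, hmul, hsep⟩ F
    exact forall_finset_of_tendsto a hmul hsep F
  · intro H
    exact exists_tendsto_of_forall_finset (A := fun n => Matrix (Fin n) (Fin n) ℂ)
      fun F ε hε => let ⟨δ, hδ, hF⟩ := H F; exists_isSeparatingOn_one hδ hF hε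
end

section
/- Let δ > 0 and set k_δ = ⌊log₂(π/δ)⌋ + 1. For all complex numbers λ, μ with |λ| = |μ| = 1 and |λ − μ| > δ, there exists a natural number k < k_δ such that |(λ · conj(μ))^(2^k) − 1| ≥ √2. -/
/-!
Write `λ * conj μ = exp (i θ)` with `θ ∈ (-π, π]`. The chord is shorter than the arc, so
`|θ| ≥ |λ - μ| > δ`. Doubling the angle until `2^k |θ| > π/2` for the first time gives
`2^k |θ| ≤ π`, hence `cos (2^k θ) ≤ 0` and `|exp (i 2^k θ) - 1|² = 2 - 2 cos (2^k θ) ≥ 2`;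
moreover `2^k ≤ π / |θ| < π / δ`, which bounds `k`.
-/

open Complex Real ComplexConjugate

theorem exists_two_pow_mul_mem_Ioc {a b : ℝ} (ha : 0 < a) (hab : a ≤ b) :
    ∃ k : ℕ, b / 2 < 2 ^ k * a ∧ 2 ^ k * a ≤ b := by
  obtain ⟨k, hle, hlt⟩ := exists_nat_pow_near ((one_le_div ha).2 hab) one_lt_two
  rw [le_div_iff₀ ha] at hle
  rw [div_lt_iff₀ ha, pow_succ] at hlt
  exact ⟨k, by linarith, hle⟩

theorem lt_floor_logb_add_one_of_pow_le {b x : ℝ} {k : ℕ} (hb : 1 < b) (h : b ^ k ≤ x) :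
    k < ⌊logb b x⌋₊ + 1 := by
  have hx : 0 < x := (pow_pos (zero_lt_one.trans hb) k).trans_le h
  refine Nat.lt_succ_of_le (Nat.le_floor ?_)
  rwa [le_logb_iff_rpow_le hb hx, rpow_natCast]

theorem norm_mul_conj_sub_one {w z : ℂ} (hz : ‖z‖ = 1) : ‖w * conj z - 1‖ = ‖w - z‖ := by
  have hzz : z * conj z = 1 := by simp [mul_conj', hz]
  rw [← hzz, ← sub_mul, norm_mul, norm_conj, hz, mul_one]

theorem sqrt_two_le_norm_exp_I_mul_ofReal_sub_one {x : ℝ} (hx : Real.cos x ≤ 0) :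
    √2 ≤ ‖exp (I * x) - 1‖ := by
  rw [norm_exp_I_mul_ofReal_sub_one, Real.sqrt_le_iff, Real.norm_eq_abs, sq_abs]
  -- `‖exp (I x) - 1‖² = 4 sin² (x / 2) = 2 - 2 cos x`
  have hcos := Real.cos_sq (x / 2)
  rw [mul_div_cancel₀ x two_ne_zero] at hcos
  exact ⟨abs_nonneg _, by nlinarith [Real.sin_sq_add_cos_sq (x / 2)]⟩

theorem exists_sqrt_two_le_norm_pow_two_pow_sub_one {z : ℂ} (hz : ‖z‖ = 1) (hz1 : z ≠ 1) :
    ∃ k : ℕ, 2 ^ k * ‖z - 1‖ ≤ π ∧ √2 ≤ ‖z ^ 2 ^ k - 1‖ := by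
  obtain ⟨θ, ⟨hθlo, hθhi⟩, rfl⟩ := norm_eq_one_iff'.1 hz
  rw [mul_comm] at hz1 ⊢
  have hchord : ‖exp (I * θ) - 1‖ ≤ |θ| := norm_exp_I_mul_ofReal_sub_one_le
  have hθ : 0 < |θ| := abs_pos.2 fun h0 => hz1 (by simp [h0])
  obtain ⟨k, hlo, hhi⟩ := exists_two_pow_mul_mem_Ioc hθ (abs_le.2 ⟨hθlo.le, hθhi⟩)
  refine ⟨k, (mul_le_mul_of_nonneg_left hchord (by positivity)).trans hhi, ?_⟩
  have hpow : exp (I * θ) ^ 2 ^ k = exp (I * ((2 ^ k * θ : ℝ) : ℂ)) := by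
    rw [← Complex.exp_nat_mul]; push_cast; ring_nf
  rw [hpow]
  refine sqrt_two_le_norm_exp_I_mul_ofReal_sub_one ?_
  rw [← Real.cos_abs, abs_mul, abs_of_pos (by positivity : (0 : ℝ) < 2 ^ k)]
  exact Real.cos_nonpos_of_pi_div_two_le_of_le hlo.le (by linarith [Real.pi_pos])

theorem stmt2 (δ : ℝ) (hδ : 0 < δ) (lam mu : ℂ)
    (hlam : ‖lam‖ = 1) (hmu : ‖mu‖ = 1)
    (h : δ < ‖lam - mu‖) :
    ∃ k : ℕ, k < Nat.floor (Real.logb 2 (Real.pi / δ)) + 1 ∧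
      Real.sqrt 2 ≤ ‖(lam * (starRingEnd ℂ) mu) ^ (2 ^ k) - 1‖ := by
  have hnorm : ‖lam * conj mu‖ = 1 := by simp [hlam, hmu]
  have hdist : ‖lam * conj mu - 1‖ = ‖lam - mu‖ := norm_mul_conj_sub_one hmu
  have hne : lam * conj mu ≠ 1 := fun h1 => by
    rw [h1, sub_self, norm_zero] at hdist; linarith
  obtain ⟨k, hk, hsqrt⟩ := exists_sqrt_two_le_norm_pow_two_pow_sub_one hnorm hne
  refine ⟨k, lt_floor_logb_add_one_of_pow_le one_lt_two ?_, hsqrt⟩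
  rw [le_div_iff₀ hδ]
  rw [hdist] at hk
  exact (mul_le_mul_of_nonneg_left h.le (by positivity)).trans hk
end

section
/- Let G be a countable group such that for every g ∈ G with g ≠ 1 there exist d : ℕ → ℕ and maps α_m : G → U(d m) with ‖α_m(qh) − α_m(q)α_m(h)‖ → 0 for all q, h ∈ G and with ‖α_m(g) − 1‖ not converging to 0. Then G is an MF-group, i.e., there exist e : ℕ → ℕ and maps ω_m : G → U(e m) with ‖ω_m(qh) − ω_m(q)ω_m(h)‖ → 0 for all q, h ∈ G and with ‖ω_m(g) − 1‖ not converging to 0 for every g ≠ 1. -/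
open Filter

/-- A sequence of maps `αₘ : G → U(d m)` is an asymptotic representation if
`‖αₘ(gh) − αₘ(g)αₘ(h)‖ → 0` for all `g h : G`. -/
def IsAsymptoticRep {G : Type*} [Group G] (d : ℕ → ℕ)
    (α : ∀ m : ℕ, G → Matrix.unitaryGroup (Fin (d m)) ℂ) : Prop :=
  ∀ g h : G,
    Tendsto (fun m : ℕ =>
      matOpNorm ((α m (g * h) : Matrix (Fin (d m)) (Fin (d m)) ℂ) -
        (α m g : Matrix (Fin (d m)) (Fin (d m)) ℂ) *
        (α m h : Matrix (Fin (d m)) (Fin (d m)) ℂ)))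
      atTop (nhds 0)

/-- A group is MF if it admits an asymptotic representation `(αₘ)` such that, for every
`g ≠ 1`, `‖αₘ(g) − 1‖` does not converge to `0`. -/
def IsMFGroup (G : Type*) [Group G] : Prop :=
  ∃ (d : ℕ → ℕ) (α : ∀ m : ℕ, G → Matrix.unitaryGroup (Fin (d m)) ℂ),
    IsAsymptoticRep d α ∧
    ∀ g : G, g ≠ 1 →
      ¬ Tendsto (fun m : ℕ =>
          matOpNorm ((α m g : Matrix (Fin (d m)) (Fin (d m)) ℂ) - 1))
        atTop (nhds 0)

open Topology

/-!
For each `g ≠ 1`, passing to a subsequence of a representation that does not asymptotically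
trivialise `g` keeps `‖αₘ(g) − 1‖ ≥ ε_g` for all `m`. Enumerate `G` by a sequence `k` visiting
every element infinitely often and take `ωₘ = α^{k m}_{N m}`, where `N m` is so large that the
multiplicativity defects of the first `m` pairs `(q, h)` are below `1 / (m + 1)`. Then `ω` is an
asymptotic representation, and `‖ωₘ(g) − 1‖ ≥ ε_g` whenever `k m = g`, i.e. infinitely often.
-/

theorem not_tendsto_zero_iff_exists_frequently_le {α : Type*} {l : Filter α} {u : α → ℝ}
    (hu : ∀ a, 0 ≤ u a) : ¬Tendsto u l (𝓝 0) ↔ ∃ ε > 0, ∃ᶠ a in l, ε ≤ u a := by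
  simp only [Metric.tendsto_nhds, Real.dist_eq, sub_zero, abs_of_nonneg (hu _)]
  push Not
  rfl

theorem exists_seq_frequently_eq (ι : Type*) [Countable ι] [Nonempty ι] :
    ∃ k : ℕ → ι, ∀ i, ∃ᶠ m in atTop, k m = i := by
  obtain ⟨s, hs⟩ := exists_surjective_nat ι
  refine ⟨fun m => s m.unpair.1, fun i => frequently_atTop.2 fun M => ?_⟩
  obtain ⟨j, rfl⟩ := hs i
  exact ⟨Nat.pair j M, Nat.right_le_pair j M, by simp⟩

theorem exists_diagonal_tendsto {J X : Type*} [Countable J] [Nonempty J] [PseudoMetricSpace X]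
    {f : ℕ → ℕ → J → X} {x : J → X} (hf : ∀ m j, Tendsto (fun n => f m n j) atTop (𝓝 (x j))) :
    ∃ N : ℕ → ℕ, ∀ j, Tendsto (fun m => f m (N m) j) atTop (𝓝 (x j)) := by
  obtain ⟨p, hp⟩ := exists_surjective_nat J
  have hgood : ∀ m, ∃ n, ∀ i ≤ m, dist (f m n (p i)) (x (p i)) < 1 / (m + 1) := fun m =>
    ((Set.finite_Iic m).eventually_all.2 fun i _ =>
      Metric.tendsto_nhds.1 (hf m (p i)) _ Nat.one_div_pos_of_nat).exists
  choose N hN using hgood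
  refine ⟨N, fun j => ?_⟩
  obtain ⟨i, rfl⟩ := hp j
  rw [tendsto_iff_dist_tendsto_zero]
  exact squeeze_zero' (Eventually.of_forall fun m => dist_nonneg)
    ((eventually_ge_atTop i).mono fun m hm => (hN m i hm).le)
    tendsto_one_div_add_atTop_nhds_zero_nat

section AsymptoticRep

variable {G : Type*} [Group G]

theorem isAsymptoticRep_one (d : ℕ → ℕ) : IsAsymptoticRep (G := G) d (fun _ _ => 1) := by
  simp [IsAsymptoticRep, matOpNorm]

theorem IsAsymptoticRep.comp {d : ℕ → ℕ} {α : ∀ m : ℕ, G → Matrix.unitaryGroup (Fin (d m)) ℂ}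
    (hα : IsAsymptoticRep d α) {φ : ℕ → ℕ} (hφ : Tendsto φ atTop atTop) :
    IsAsymptoticRep (d ∘ φ) (fun m => α (φ m)) :=
  fun g h => (hα g h).comp hφ

theorem IsAsymptoticRep.exists_uniformly_separating {d : ℕ → ℕ}
    {α : ∀ m : ℕ, G → Matrix.unitaryGroup (Fin (d m)) ℂ} (hα : IsAsymptoticRep d α) {g : G}
    (hg : ¬Tendsto (fun m => matOpNorm ((α m g : Matrix (Fin (d m)) (Fin (d m)) ℂ) - 1))
      atTop (𝓝 0)) :
    ∃ (d' : ℕ → ℕ) (α' : ∀ m : ℕ, G → Matrix.unitaryGroup (Fin (d' m)) ℂ),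
      IsAsymptoticRep d' α' ∧
      ∃ ε > 0, ∀ m, ε ≤ matOpNorm ((α' m g : Matrix (Fin (d' m)) (Fin (d' m)) ℂ) - 1) := by
  obtain ⟨ε, hε, hfreq⟩ := (not_tendsto_zero_iff_exists_frequently_le fun m => norm_nonneg _).1 hg
  obtain ⟨φ, hφ, hle⟩ := extraction_of_frequently_atTop hfreq
  exact ⟨d ∘ φ, fun m => α (φ m), hα.comp hφ.tendsto_atTop, ε, hε, hle⟩

end AsymptoticRep

theorem stmt5 (G : Type*) [Group G] [Countable G]
    (hres : ∀ g : G, g ≠ 1 →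
      ∃ (d : ℕ → ℕ) (α : ∀ m : ℕ, G → Matrix.unitaryGroup (Fin (d m)) ℂ),
        IsAsymptoticRep d α ∧
        ¬ Tendsto (fun m : ℕ =>
            matOpNorm ((α m g : Matrix (Fin (d m)) (Fin (d m)) ℂ) - 1))
          atTop (nhds 0)) :
    IsMFGroup G := by
  have hsep : ∀ g : G, ∃ (d : ℕ → ℕ) (α : ∀ m : ℕ, G → Matrix.unitaryGroup (Fin (d m)) ℂ),
      IsAsymptoticRep d α ∧
      (g ≠ 1 → ∃ ε > 0, ∀ n, ε ≤ matOpNorm ((α n g : Matrix (Fin (d n)) (Fin (d n)) ℂ) - 1)) := by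
    intro g
    by_cases hg : g = 1
    · exact ⟨fun _ => 0, fun _ _ => 1, isAsymptoticRep_one _, fun h => (h hg).elim⟩
    · obtain ⟨d, α, hα, hg'⟩ := hres g hg
      obtain ⟨d', α', hα', hε⟩ := hα.exists_uniformly_separating hg'
      exact ⟨d', α', hα', fun _ => hε⟩
  choose d α hα hsep using hsep
  obtain ⟨k, hk⟩ := exists_seq_frequently_eq G
  obtain ⟨N, hN⟩ := exists_diagonal_tendsto (x := 0) (f := fun m n (gh : G × G) =>
      matOpNorm ((α (k m) n (gh.1 * gh.2) : Matrix (Fin (d (k m) n)) (Fin (d (k m) n)) ℂ) -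
        (α (k m) n gh.1 : Matrix (Fin (d (k m) n)) (Fin (d (k m) n)) ℂ) *
        (α (k m) n gh.2 : Matrix (Fin (d (k m) n)) (Fin (d (k m) n)) ℂ)))
      fun m gh => hα (k m) gh.1 gh.2
  refine ⟨fun m => d (k m) (N m), fun m => α (k m) (N m), fun g h => hN (g, h), fun g hg => ?_⟩
  obtain ⟨ε, hε, hle⟩ := hsep g hg
  refine (not_tendsto_zero_iff_exists_frequently_le fun m => norm_nonneg _).2
    ⟨ε, hε, (hk g).mono fun m hm => ?_⟩
  subst hm
  exact hle _
end

section
/- Let G be a countable MF-group, F a finite group, and φ : F → Aut(G) an action of F on G by automorphisms. Then the semidirect product G ⋊_φ F is an MF-group. -/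
set_option linter.unusedSectionVars false


open Filter

/-! ### Auxiliary analytic lemmas about `matOpNorm` -/

section Core
variable {N N' : Type*} [Fintype N] [DecidableEq N] [Fintype N'] [DecidableEq N']

lemma MF.clm_apply (A : Matrix N N ℂ) (x : EuclideanSpace ℂ N) (i : N) :
    (Matrix.toEuclideanCLM (𝕜 := ℂ) A x) i = A.mulVec x i := rfl

lemma MF.eucl_norm_sq (x : EuclideanSpace ℂ N) : ‖x‖ ^ 2 = ∑ i, ‖x i‖ ^ 2 := by
  rw [EuclideanSpace.norm_eq]
  exact Real.sq_sqrt (by positivity)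

lemma matOpNorm_nonneg (A : Matrix N N ℂ) : 0 ≤ matOpNorm A := norm_nonneg _

lemma matOpNorm_le_of (A : Matrix N N ℂ) (C : ℝ) (hC : 0 ≤ C)
    (h : ∀ x : EuclideanSpace ℂ N, ∑ i, ‖A.mulVec x i‖ ^ 2 ≤ C ^ 2 * ‖x‖ ^ 2) :
    matOpNorm A ≤ C := by
  apply ContinuousLinearMap.opNorm_le_bound _ hC
  intro x
  have h1 : ‖Matrix.toEuclideanCLM (𝕜 := ℂ) A x‖ ^ 2 ≤ (C * ‖x‖) ^ 2 := by
    rw [MF.eucl_norm_sq, mul_pow]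
    simpa [MF.clm_apply] using h x
  have h2 : (0:ℝ) ≤ C * ‖x‖ := by positivity
  nlinarith [norm_nonneg (Matrix.toEuclideanCLM (𝕜 := ℂ) A x)]

lemma sq_mulVec_le (A : Matrix N N ℂ) (x : EuclideanSpace ℂ N) :
    ∑ i, ‖A.mulVec x i‖ ^ 2 ≤ matOpNorm A ^ 2 * ‖x‖ ^ 2 := by
  have := (Matrix.toEuclideanCLM (𝕜 := ℂ) A).le_opNorm x
  have h2 : ‖Matrix.toEuclideanCLM (𝕜 := ℂ) A x‖ ^ 2 ≤ (matOpNorm A * ‖x‖) ^ 2 :=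
    pow_le_pow_left₀ (norm_nonneg _) this 2
  rw [MF.eucl_norm_sq] at h2
  simpa [MF.clm_apply, mul_pow] using h2

lemma matOpNorm_submatrix_le (A : Matrix N N ℂ) (σ τ : N' ≃ N) :
    matOpNorm (A.submatrix σ τ) ≤ matOpNorm A := by
  apply matOpNorm_le_of _ _ (matOpNorm_nonneg A)
  intro x
  set x' : EuclideanSpace ℂ N := (WithLp.equiv 2 (N → ℂ)).symm (⇑x ∘ ⇑τ.symm) with hx'
  have hmv : (A.submatrix σ τ).mulVec x = (A.mulVec x') ∘ σ := by
    rw [Matrix.submatrix_mulVec_equiv]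
    rfl
  have hxn : ‖x'‖ ^ 2 = ‖x‖ ^ 2 := by
    rw [MF.eucl_norm_sq, MF.eucl_norm_sq]
    exact Fintype.sum_equiv τ.symm _ _ (fun i => by simp [hx'])
  calc ∑ i, ‖(A.submatrix σ τ).mulVec x i‖ ^ 2
      = ∑ i, ‖A.mulVec x' i‖ ^ 2 := by
        rw [hmv]
        exact Fintype.sum_equiv σ _ _ (fun i => rfl)
    _ ≤ matOpNorm A ^ 2 * ‖x'‖ ^ 2 := sq_mulVec_le A x'
    _ = matOpNorm A ^ 2 * ‖x‖ ^ 2 := by rw [hxn]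

lemma matOpNorm_submatrix (A : Matrix N N ℂ) (σ τ : N' ≃ N) :
    matOpNorm (A.submatrix σ τ) = matOpNorm A := by
  refine le_antisymm (matOpNorm_submatrix_le A σ τ) ?_
  have h : A = (A.submatrix σ τ).submatrix σ.symm τ.symm := by
    ext i j; simp
  calc matOpNorm A = matOpNorm ((A.submatrix σ τ).submatrix σ.symm τ.symm) := by rw [← h]
    _ ≤ matOpNorm (A.submatrix σ τ) := matOpNorm_submatrix_le _ _ _

lemma matOpNorm_submatrix_id (A : Matrix N N ℂ) (τ : N' ≃ N) (σ : N' ≃ N) :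
    matOpNorm (A.submatrix ⇑σ ⇑τ) = matOpNorm A := matOpNorm_submatrix A σ τ

variable {F : Type*} [Fintype F] [DecidableEq F]

lemma blockDiagonal_mulVec_apply (M : F → Matrix N N ℂ) (x : N × F → ℂ) (i : N) (f : F) :
    (Matrix.blockDiagonal M).mulVec x (i, f) = (M f).mulVec (fun j => x (j, f)) i := by
  simp [Matrix.mulVec, dotProduct, Fintype.sum_prod_type, Matrix.blockDiagonal_apply,
    ite_mul, zero_mul, Finset.sum_ite_eq]

lemma matOpNorm_blockDiagonal_le (M : F → Matrix N N ℂ) (C : ℝ) (hC : 0 ≤ C)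
    (h : ∀ f, matOpNorm (M f) ≤ C) : matOpNorm (Matrix.blockDiagonal M) ≤ C := by
  apply matOpNorm_le_of _ _ hC
  intro x
  have key : ∀ f, ∑ i, ‖(Matrix.blockDiagonal M).mulVec x (i, f)‖ ^ 2
      ≤ C ^ 2 * ∑ j, ‖x (j, f)‖ ^ 2 := by
    intro f
    set xf : EuclideanSpace ℂ N := (WithLp.equiv 2 (N → ℂ)).symm (fun j => x (j, f)) with hxf
    have h1 : ∑ i, ‖(Matrix.blockDiagonal M).mulVec x (i, f)‖ ^ 2
        = ∑ i, ‖(M f).mulVec xf i‖ ^ 2 := by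
      refine Finset.sum_congr rfl fun i _ => ?_
      rw [blockDiagonal_mulVec_apply]
      rfl
    have h2 := sq_mulVec_le (M f) xf
    have h3 : ‖xf‖ ^ 2 = ∑ j, ‖x (j, f)‖ ^ 2 := by
      rw [MF.eucl_norm_sq]; exact Finset.sum_congr rfl fun j _ => by simp [hxf]
    have h4 : matOpNorm (M f) ^ 2 ≤ C ^ 2 := pow_le_pow_left₀ (matOpNorm_nonneg _) (h f) 2
    have h5 : (0:ℝ) ≤ ∑ j, ‖x (j, f)‖ ^ 2 := by positivity
    rw [h1]
    calc ∑ i, ‖(M f).mulVec xf i‖ ^ 2 ≤ matOpNorm (M f) ^ 2 * ‖xf‖ ^ 2 := h2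
      _ = matOpNorm (M f) ^ 2 * ∑ j, ‖x (j, f)‖ ^ 2 := by rw [h3]
      _ ≤ C ^ 2 * ∑ j, ‖x (j, f)‖ ^ 2 := mul_le_mul_of_nonneg_right h4 h5
  calc ∑ p : N × F, ‖(Matrix.blockDiagonal M).mulVec x p‖ ^ 2
      = ∑ f, ∑ i, ‖(Matrix.blockDiagonal M).mulVec x (i, f)‖ ^ 2 := by
        rw [Fintype.sum_prod_type]; exact Finset.sum_comm
    _ ≤ ∑ f, C ^ 2 * ∑ j, ‖x (j, f)‖ ^ 2 := Finset.sum_le_sum fun f _ => key f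
    _ = C ^ 2 * ‖x‖ ^ 2 := by
        rw [← Finset.mul_sum, MF.eucl_norm_sq, Fintype.sum_prod_type]
        rw [Finset.sum_comm]

lemma le_matOpNorm_blockDiagonal (M : F → Matrix N N ℂ) (f₀ : F) :
    matOpNorm (M f₀) ≤ matOpNorm (Matrix.blockDiagonal M) := by
  apply matOpNorm_le_of _ _ (matOpNorm_nonneg _)
  intro x
  set y : EuclideanSpace ℂ (N × F) :=
    (WithLp.equiv 2 (N × F → ℂ)).symm (fun p => if p.2 = f₀ then x p.1 else 0) with hy
  have hyapp : ∀ p : N × F, y p = if p.2 = f₀ then x p.1 else 0 := fun p => rfl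
  have hyn : ‖y‖ ^ 2 = ‖x‖ ^ 2 := by
    have h1 : ∀ f, ∑ i, ‖y (i, f)‖ ^ 2 = if f = f₀ then ∑ i, ‖x i‖ ^ 2 else 0 := by
      intro f; by_cases hf : f = f₀ <;> simp [hyapp, hf]
    rw [MF.eucl_norm_sq, MF.eucl_norm_sq (x := x), Fintype.sum_prod_type, Finset.sum_comm]
    simp only [h1, Finset.sum_ite_eq', Finset.mem_univ, if_true]
  have hmv : ∀ (i : N) (f : F), (Matrix.blockDiagonal M).mulVec y (i, f)
      = if f = f₀ then (M f₀).mulVec x i else 0 := by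
    intro i f
    rw [blockDiagonal_mulVec_apply]
    by_cases hf : f = f₀
    · subst hf; simp [hyapp]
    · have h0 : (fun j => y (j, f)) = (0 : N → ℂ) := by funext j; simp [hyapp, hf]
      simp [h0, hf]
  calc ∑ i, ‖(M f₀).mulVec x i‖ ^ 2
      = ∑ i, ‖(Matrix.blockDiagonal M).mulVec y (i, f₀)‖ ^ 2 := by simp [hmv]
    _ ≤ ∑ f, ∑ i, ‖(Matrix.blockDiagonal M).mulVec y (i, f)‖ ^ 2 :=
        Finset.single_le_sum
          (f := fun f => ∑ i, ‖(Matrix.blockDiagonal M).mulVec y (i, f)‖ ^ 2)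
          (fun f _ => by positivity) (Finset.mem_univ f₀)
    _ = ∑ p : N × F, ‖(Matrix.blockDiagonal M).mulVec y p‖ ^ 2 := by
        rw [Fintype.sum_prod_type, Finset.sum_comm]
    _ ≤ matOpNorm (Matrix.blockDiagonal M) ^ 2 * ‖y‖ ^ 2 := sq_mulVec_le _ y
    _ = matOpNorm (Matrix.blockDiagonal M) ^ 2 * ‖x‖ ^ 2 := by rw [hyn]

lemma matOpNorm_fromBlocks00_le (A : Matrix N N ℂ) :
    matOpNorm (Matrix.fromBlocks A 0 0 (0 : Matrix N' N' ℂ)) ≤ matOpNorm A := by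
  apply matOpNorm_le_of _ _ (matOpNorm_nonneg _)
  intro x
  set x₁ : EuclideanSpace ℂ N := (WithLp.equiv 2 (N → ℂ)).symm (⇑x ∘ Sum.inl) with hx₁
  have hx : ⇑x = Sum.elim (⇑x ∘ Sum.inl) (⇑x ∘ Sum.inr) := by
    funext i; cases i <;> rfl
  have hmv : (Matrix.fromBlocks A 0 0 (0 : Matrix N' N' ℂ)).mulVec x
      = Sum.elim (A.mulVec x₁) 0 := by
    show (Matrix.fromBlocks A 0 0 (0 : Matrix N' N' ℂ)).mulVec ⇑x = _
    rw [hx, Matrix.fromBlocks_mulVec]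
    simp only [Sum.elim_comp_inl, Sum.elim_comp_inr, Matrix.zero_mulVec, add_zero, zero_add]
    rfl
  have hx₁n : ‖x₁‖ ^ 2 ≤ ‖x‖ ^ 2 := by
    rw [MF.eucl_norm_sq, MF.eucl_norm_sq, Fintype.sum_sum_type]
    have h0 : (0:ℝ) ≤ ∑ j : N', ‖x (Sum.inr j)‖ ^ 2 := by positivity
    have h2 : ∑ i, ‖x₁ i‖ ^ 2 = ∑ i : N, ‖x (Sum.inl i)‖ ^ 2 :=
      Finset.sum_congr rfl fun i _ => by simp [hx₁]
    rw [h2]; linarith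
  calc ∑ s, ‖(Matrix.fromBlocks A 0 0 (0 : Matrix N' N' ℂ)).mulVec x s‖ ^ 2
      = ∑ i, ‖A.mulVec x₁ i‖ ^ 2 := by
        rw [hmv, Fintype.sum_sum_type]; simp
    _ ≤ matOpNorm A ^ 2 * ‖x₁‖ ^ 2 := sq_mulVec_le _ _
    _ ≤ matOpNorm A ^ 2 * ‖x‖ ^ 2 := by
        have := matOpNorm_nonneg A; nlinarith [hx₁n]

lemma le_matOpNorm_fromBlocks (A : Matrix N N ℂ) (B : Matrix N N' ℂ) (C : Matrix N' N ℂ)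
    (D : Matrix N' N' ℂ) : matOpNorm A ≤ matOpNorm (Matrix.fromBlocks A B C D) := by
  apply matOpNorm_le_of _ _ (matOpNorm_nonneg _)
  intro x
  set y : EuclideanSpace ℂ (N ⊕ N') :=
    (WithLp.equiv 2 (N ⊕ N' → ℂ)).symm (Sum.elim ⇑x 0) with hy
  have hmv : (Matrix.fromBlocks A B C D).mulVec y
      = Sum.elim (A.mulVec x) (C.mulVec x) := by
    show (Matrix.fromBlocks A B C D).mulVec (Sum.elim ⇑x 0) = _
    rw [Matrix.fromBlocks_mulVec]
    simp only [Sum.elim_comp_inl, Sum.elim_comp_inr, Matrix.mulVec_zero, add_zero]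
  have hyn : ‖y‖ ^ 2 = ‖x‖ ^ 2 := by
    rw [MF.eucl_norm_sq, MF.eucl_norm_sq, Fintype.sum_sum_type]
    simp [hy]
  calc ∑ i, ‖A.mulVec x i‖ ^ 2
      ≤ ∑ i, ‖A.mulVec x i‖ ^ 2 + ∑ j, ‖C.mulVec x j‖ ^ 2 :=
        le_add_of_nonneg_right (by positivity)
    _ = ∑ s, ‖(Matrix.fromBlocks A B C D).mulVec y s‖ ^ 2 := by
        rw [hmv, Fintype.sum_sum_type]
        simp
    _ ≤ matOpNorm (Matrix.fromBlocks A B C D) ^ 2 * ‖y‖ ^ 2 := sq_mulVec_le _ _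
    _ = _ := by rw [hyn]

end Core

/-! ### The block-permutation matrices -/

section SemiAux
variable {G F : Type*} [Group G] [Group F] [Fintype F] [DecidableEq F] (φ : F →* MulAut G)
variable {N : Type*} [Fintype N] [DecidableEq N]

/-- The shift `(i, f) ↦ (i, k f)`. -/
def shiftE (N : Type*) (k : F) : N × F ≃ N × F := (Equiv.refl N).prodCongr (Equiv.mulLeft k)

lemma shiftE_apply (k : F) (p : N × F) : shiftE N k p = (p.1, k * p.2) := rfl

lemma shiftE_symm_apply (k : F) (p : N × F) : (shiftE N k).symm p = (p.1, k⁻¹ * p.2) := rfl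

lemma shiftE_one : shiftE N (1 : F) = Equiv.refl (N × F) := by
  apply Equiv.ext
  intro p
  rw [shiftE_apply]
  simp

lemma blockDiagonal_shift (M : F → Matrix N N ℂ) (k : F) :
    (Matrix.blockDiagonal M).submatrix ⇑(shiftE N k).symm ⇑(shiftE N k).symm
      = Matrix.blockDiagonal (fun f => M (k⁻¹ * f)) := by
  ext ⟨i, f⟩ ⟨j, f'⟩
  simp [shiftE_symm_apply, Matrix.blockDiagonal_apply, mul_right_inj]

lemma smat_mul_aux (M₁ M₂ : F → Matrix N N ℂ) (k₁ k₂ : F) :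
    (Matrix.blockDiagonal M₁).submatrix id ⇑(shiftE N k₁) *
      (Matrix.blockDiagonal M₂).submatrix id ⇑(shiftE N k₂) =
      (Matrix.blockDiagonal fun f => M₁ f * M₂ (k₁⁻¹ * f)).submatrix id
        ⇑(shiftE N (k₁ * k₂)) := by
  have hcomp : ⇑(shiftE N k₁) ∘ ⇑(shiftE N k₂) = ⇑(shiftE N (k₁ * k₂)) := by
    funext p
    simp [shiftE_apply, mul_assoc]
  have h2 : (Matrix.blockDiagonal M₂).submatrix id ⇑(shiftE N k₂)
      = ((Matrix.blockDiagonal M₂).submatrix ⇑(shiftE N k₁).symm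
          ⇑(shiftE N k₁).symm).submatrix ⇑(shiftE N k₁) (⇑(shiftE N k₁) ∘ ⇑(shiftE N k₂)) := by
    rw [Matrix.submatrix_submatrix]
    ext p q
    simp
  rw [h2, Matrix.submatrix_mul_equiv, blockDiagonal_shift, ← Matrix.blockDiagonal_mul, hcomp]

lemma smat_unitary' (M : F → Matrix N N ℂ) (hM : ∀ f, M f ∈ Matrix.unitaryGroup N ℂ) (k : F) :
    (Matrix.blockDiagonal M).submatrix id ⇑(shiftE N k) ∈ Matrix.unitaryGroup (N × F) ℂ := by
  rw [Matrix.mem_unitaryGroup_iff]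
  have hstar : star ((Matrix.blockDiagonal M).submatrix id ⇑(shiftE N k))
      = (Matrix.blockDiagonal fun f => star (M f)).submatrix ⇑(shiftE N k) id := by
    rw [Matrix.star_eq_conjTranspose, Matrix.conjTranspose_submatrix,
      Matrix.blockDiagonal_conjTranspose]
    simp only [Matrix.star_eq_conjTranspose]
  rw [hstar, Matrix.submatrix_mul_equiv, Matrix.submatrix_id_id, ← Matrix.blockDiagonal_mul]
  have h1 : (fun f => M f * star (M f)) = (1 : F → Matrix N N ℂ) := by
    funext f
    simp only [Pi.one_apply]
    exact (Matrix.mem_unitaryGroup_iff).mp (hM f)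
  rw [h1, Matrix.blockDiagonal_one]

/-- The matrix of the "induced representation" on `ℂ^N ⊗ ℓ²(F)`. -/
noncomputable def smat (α : G → Matrix N N ℂ) (x : G ⋊[φ] F) : Matrix (N × F) (N × F) ℂ :=
  (Matrix.blockDiagonal fun f => α ((φ f⁻¹) x.left)).submatrix id ⇑(shiftE N x.right)

lemma smat_unitary (α : G → Matrix N N ℂ) (hα : ∀ g, α g ∈ Matrix.unitaryGroup N ℂ)
    (x : G ⋊[φ] F) : smat φ α x ∈ Matrix.unitaryGroup (N × F) ℂ :=
  smat_unitary' _ (fun f => hα _) _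

lemma smat_mul (α : G → Matrix N N ℂ) (x y : G ⋊[φ] F) :
    smat φ α (x * y) - smat φ α x * smat φ α y =
    (Matrix.blockDiagonal fun f =>
        α ((φ f⁻¹) x.left * (φ (f⁻¹ * x.right)) y.left)
          - α ((φ f⁻¹) x.left) * α ((φ (f⁻¹ * x.right)) y.left)).submatrix id
      ⇑(shiftE N (x.right * y.right)) := by
  unfold smat
  rw [smat_mul_aux]
  have hr : (x * y).right = x.right * y.right := rfl
  have hl : ∀ f : F, (φ f⁻¹) (x * y).left
      = (φ f⁻¹) x.left * (φ (f⁻¹ * x.right)) y.left := by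
    intro f
    rw [SemidirectProduct.mul_left, map_mul]
    congr 1
    rw [map_mul φ, MulAut.mul_apply]
  have hv : ∀ f : F, (φ (x.right⁻¹ * f)⁻¹) y.left = (φ (f⁻¹ * x.right)) y.left := by
    intro f
    rw [mul_inv_rev, inv_inv]
  rw [hr]
  ext ⟨i, f⟩ ⟨j, f'⟩
  simp only [Matrix.sub_apply, Matrix.submatrix_apply, Matrix.blockDiagonal_apply, id_eq]
  rw [hl f, hv f]
  split_ifs <;> simp [Matrix.sub_apply]



lemma matOpNorm_submatrix_shift (A : Matrix (N × F) (N × F) ℂ) (k : F) :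
    matOpNorm (A.submatrix id ⇑(shiftE N k)) = matOpNorm A := by
  have hid : (id : N × F → N × F) = ⇑(Equiv.refl (N × F)) := rfl
  rw [hid, matOpNorm_submatrix]

lemma unitary_reindex {N' : Type*} [Fintype N'] [DecidableEq N'] (e : N ≃ N')
    (A : Matrix N N ℂ) (h : A ∈ Matrix.unitaryGroup N ℂ) :
    Matrix.reindex e e A ∈ Matrix.unitaryGroup N' ℂ := by
  rw [Matrix.mem_unitaryGroup_iff] at h ⊢
  rw [Matrix.reindex_apply, Matrix.star_eq_conjTranspose, Matrix.conjTranspose_submatrix,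
    Matrix.submatrix_mul_equiv, ← Matrix.star_eq_conjTranspose, h, Matrix.submatrix_one_equiv]

lemma blockDiagonal_sub_one (M : F → Matrix N N ℂ) :
    Matrix.blockDiagonal M - 1 = Matrix.blockDiagonal (fun f => M f - 1) := by
  have h := Matrix.blockDiagonal_sub M (1 : F → Matrix N N ℂ)
  rw [Matrix.blockDiagonal_one] at h
  exact h.symm

lemma one_le_smat_sub_one (M : F → Matrix N N ℂ) (k : F) (hk : k ≠ 1) (i₀ : N) :
    1 ≤ matOpNorm ((Matrix.blockDiagonal M).submatrix id ⇑(shiftE N k) - 1) := by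
  set B := (Matrix.blockDiagonal M).submatrix id ⇑(shiftE N k) with hB
  set y : EuclideanSpace ℂ (N × F) :=
    (WithLp.equiv 2 (N × F → ℂ)).symm (fun p => if p = (i₀, (1:F)) then 1 else 0) with hy
  have hyapp : ∀ p, y p = if p = (i₀, (1:F)) then 1 else 0 := fun p => rfl
  have hyn : ‖y‖ ^ 2 = 1 := by
    rw [MF.eucl_norm_sq]
    have h0 : ∀ p : N × F, ‖y p‖ ^ 2 = if p = (i₀, (1:F)) then 1 else 0 := by
      intro p; by_cases hp : p = (i₀, (1:F)) <;> simp [hyapp, hp]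
    simp only [h0]
    simp [Finset.sum_ite_eq']
  have hBy : (B - 1).mulVec y (i₀, (1:F)) = -1 := by
    have h1 : B.mulVec y = (Matrix.blockDiagonal M).mulVec (⇑y ∘ ⇑(shiftE N k).symm) := by
      rw [hB, Matrix.submatrix_mulVec_equiv]; rfl
    have h2 : (Matrix.blockDiagonal M).mulVec (⇑y ∘ ⇑(shiftE N k).symm) (i₀, (1:F)) = 0 := by
      rw [blockDiagonal_mulVec_apply]
      have h3 : (fun j => (⇑y ∘ ⇑(shiftE N k).symm) (j, (1:F))) = (0 : N → ℂ) := by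
        funext j
        have h4 : (shiftE N k).symm (j, (1:F)) = (j, k⁻¹) := by
          rw [shiftE_symm_apply]; simp
        show y ((shiftE N k).symm (j, (1:F))) = 0
        rw [h4, hyapp]
        rw [if_neg]
        intro hcon
        exact hk (inv_eq_one.mp (congrArg Prod.snd hcon))
      rw [h3, Matrix.mulVec_zero]
      rfl
    have h5 : y (i₀, (1:F)) = 1 := by rw [hyapp]; simp
    rw [Matrix.sub_mulVec, Pi.sub_apply, h1, h2, Matrix.one_mulVec]
    rw [show ((y : N × F → ℂ) (i₀, (1:F))) = 1 from h5]
    ring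
  have hfin : (1:ℝ) ≤ ∑ p : N × F, ‖(B - 1).mulVec y p‖ ^ 2 := by
    have h7 := Finset.single_le_sum (f := fun p : N × F => ‖(B - 1).mulVec y p‖ ^ 2)
      (fun p _ => by positivity) (Finset.mem_univ (i₀, (1:F)))
    simp only [hBy] at h7
    simpa using h7
  have hle := sq_mulVec_le (B - 1) y
  rw [hyn, mul_one] at hle
  nlinarith [matOpNorm_nonneg (B - 1)]

end SemiAux

theorem stmt9 (G : Type*) [Group G] [Countable G]
    (F : Type*) [Group F] [Finite F]
    (φ : F →* MulAut G) (hG : IsMFGroup G) :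
    IsMFGroup (G ⋊[φ] F) := by
  classical
  letI : Fintype F := Fintype.ofFinite F
  obtain ⟨d, α, hrep, hne⟩ := hG
  set β : ∀ m : ℕ, G → Matrix (Fin (d m) ⊕ Fin 1) (Fin (d m) ⊕ Fin 1) ℂ :=
    fun m g => Matrix.fromBlocks (↑(α m g)) 0 0 1 with hβ
  have hβu : ∀ m g, β m g ∈ Matrix.unitaryGroup (Fin (d m) ⊕ Fin 1) ℂ := by
    intro m g
    rw [Matrix.mem_unitaryGroup_iff]
    have h2 : (↑(α m g) : Matrix (Fin (d m)) (Fin (d m)) ℂ)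
        * star (↑(α m g) : Matrix (Fin (d m)) (Fin (d m)) ℂ) = 1 :=
      Matrix.mem_unitaryGroup_iff.mp (α m g).2
    rw [Matrix.star_eq_conjTranspose] at h2
    simp only [hβ]
    rw [Matrix.star_eq_conjTranspose, Matrix.fromBlocks_conjTranspose,
      Matrix.fromBlocks_multiply]
    simp only [Matrix.conjTranspose_zero, Matrix.conjTranspose_one, Matrix.mul_zero,
      Matrix.zero_mul, Matrix.mul_one, Matrix.one_mul, add_zero, zero_add, h2]
    exact Matrix.fromBlocks_one
  have hβsub : ∀ m (g h : G), β m (g * h) - β m g * β m h =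
      Matrix.fromBlocks ((α m (g * h) : Matrix (Fin (d m)) (Fin (d m)) ℂ)
        - (α m g : Matrix (Fin (d m)) (Fin (d m)) ℂ)
          * (α m h : Matrix (Fin (d m)) (Fin (d m)) ℂ)) 0 0 0 := by
    intro m g h
    simp only [hβ]
    rw [Matrix.fromBlocks_multiply]
    ext i j
    rcases i with i | i <;> rcases j with j | j <;>
      simp [Matrix.fromBlocks, Matrix.sub_apply]
  have hβsubone : ∀ m g, β m g - 1 =
      Matrix.fromBlocks ((α m g : Matrix (Fin (d m)) (Fin (d m)) ℂ) - 1) 0 0 0 := by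
    intro m g
    simp only [hβ]
    ext i j
    rcases i with i | i <;> rcases j with j | j <;>
      simp [Matrix.fromBlocks, Matrix.sub_apply, Matrix.one_apply]
  set d' : ℕ → ℕ := fun m => (d m + 1) * Fintype.card F with hd'
  have e : ∀ m, ((Fin (d m) ⊕ Fin 1) × F) ≃ Fin (d' m) :=
    fun m => (finSumFinEquiv.prodCongr (Fintype.equivFin F)).trans finProdFinEquiv
  set A : ∀ m : ℕ, (G ⋊[φ] F) → Matrix (Fin (d' m)) (Fin (d' m)) ℂ :=
    fun m x => Matrix.reindexAlgEquiv ℂ ℂ (e m) (smat φ (β m) x) with hA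
  have hAnorm_sub_mul : ∀ m (x y : G ⋊[φ] F),
      matOpNorm (A m (x * y) - A m x * A m y)
      = matOpNorm (smat φ (β m) (x * y) - smat φ (β m) x * smat φ (β m) y) := by
    intro m x y
    have h1 : A m (x * y) - A m x * A m y
        = Matrix.reindexAlgEquiv ℂ ℂ (e m)
            (smat φ (β m) (x * y) - smat φ (β m) x * smat φ (β m) y) := by
      simp only [hA]
      rw [map_sub, map_mul]
    rw [h1, Matrix.reindexAlgEquiv_apply, Matrix.reindex_apply, matOpNorm_submatrix]
  have hAnorm_sub_one : ∀ m (x : G ⋊[φ] F),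
      matOpNorm (A m x - 1) = matOpNorm (smat φ (β m) x - 1) := by
    intro m x
    have h1 : A m x - 1 = Matrix.reindexAlgEquiv ℂ ℂ (e m) (smat φ (β m) x - 1) := by
      simp only [hA]
      rw [map_sub, map_one]
    rw [h1, Matrix.reindexAlgEquiv_apply, Matrix.reindex_apply, matOpNorm_submatrix]
  refine ⟨d', fun m x => ⟨A m x, ?_⟩, ?_, ?_⟩
  · -- unitarity
    have h1 : A m x = Matrix.reindex (e m) (e m) (smat φ (β m) x) := by
      simp only [hA, Matrix.reindexAlgEquiv_apply]
    rw [h1]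
    exact unitary_reindex (e m) _ (smat_unitary φ (β m) (fun g => hβu m g) x)
  · -- asymptotic representation
    intro x y
    have hconv : ∀ f : F, Tendsto (fun m => matOpNorm
        (β m ((φ f⁻¹) x.left * (φ (f⁻¹ * x.right)) y.left)
          - β m ((φ f⁻¹) x.left) * β m ((φ (f⁻¹ * x.right)) y.left))) atTop (nhds 0) := by
      intro f
      refine squeeze_zero (fun m => matOpNorm_nonneg _) (fun m => ?_)
        (hrep ((φ f⁻¹) x.left) ((φ (f⁻¹ * x.right)) y.left))
      rw [hβsub m _ _]
      exact matOpNorm_fromBlocks00_le _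
    show Tendsto (fun m => matOpNorm (A m (x * y) - A m x * A m y)) atTop (nhds 0)
    have hbound : ∀ m, matOpNorm (A m (x * y) - A m x * A m y) ≤
        ∑ f : F, matOpNorm (β m ((φ f⁻¹) x.left * (φ (f⁻¹ * x.right)) y.left)
          - β m ((φ f⁻¹) x.left) * β m ((φ (f⁻¹ * x.right)) y.left)) := by
      intro m
      rw [hAnorm_sub_mul m x y, smat_mul, matOpNorm_submatrix_shift]
      refine matOpNorm_blockDiagonal_le _ _
        (Finset.sum_nonneg fun f _ => matOpNorm_nonneg _) (fun f => ?_)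
      exact Finset.single_le_sum
        (f := fun f => matOpNorm (β m ((φ f⁻¹) x.left * (φ (f⁻¹ * x.right)) y.left)
          - β m ((φ f⁻¹) x.left) * β m ((φ (f⁻¹ * x.right)) y.left)))
        (fun f _ => matOpNorm_nonneg _) (Finset.mem_univ f)
    refine squeeze_zero (fun m => matOpNorm_nonneg _) hbound ?_
    have hsum := tendsto_finset_sum (Finset.univ : Finset F) (fun f _ => hconv f)
    simpa using hsum
  · -- separation
    intro x hx hT
    by_cases hxr : x.right = 1
    · have hxl : x.left ≠ 1 := by
        intro h
        exact hx (by ext <;> simp [h, hxr])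
      apply hne x.left hxl
      refine squeeze_zero (fun m => norm_nonneg _) (fun m => ?_) hT
      show matOpNorm ((α m x.left : Matrix (Fin (d m)) (Fin (d m)) ℂ) - 1)
        ≤ matOpNorm (A m x - 1)
      rw [hAnorm_sub_one m x]
      have h2 : smat φ (β m) x = Matrix.blockDiagonal (fun f => β m ((φ f⁻¹) x.left)) := by
        unfold smat
        rw [hxr, shiftE_one]
        simp [Matrix.submatrix_id_id]
      rw [h2, blockDiagonal_sub_one]
      have h3 : matOpNorm ((α m x.left : Matrix (Fin (d m)) (Fin (d m)) ℂ) - 1)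
          ≤ matOpNorm (β m x.left - 1) := by
        rw [hβsubone]
        exact le_matOpNorm_fromBlocks _ _ _ _
      have h4 := le_matOpNorm_blockDiagonal (fun f => β m ((φ f⁻¹) x.left) - 1) 1
      simp only [inv_one, map_one, MulAut.one_apply] at h4
      exact le_trans h3 h4
    · have hlow : ∀ m, (1:ℝ) ≤ matOpNorm (A m x - 1) := by
        intro m
        rw [hAnorm_sub_one m x]
        exact one_le_smat_sub_one (fun f => β m ((φ f⁻¹) x.left)) x.right hxr (Sum.inr 0)
      obtain ⟨m, hm⟩ := (hT.eventually_lt_const (by norm_num : (0:ℝ) < 1)).exists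
      have := hlow m
      change matOpNorm (A m x - 1) < 1 at hm
      linarith
end

section
/- Let G be a group, φ an automorphism of G, and G ⋊_ψ ℤ the semidirect product where ψ : ℤ → Aut(G) is given by ψ(k) = φ^k. Let F be any group and α : G ⋊_ψ ℤ → F a group homomorphism. Suppose that for every nonzero k ∈ ℤ the automorphism φ^k is not inner (i.e., there is no ω ∈ G with φ^k(h) = ω⁻¹hω for all h ∈ G), and that the restriction of α to G (the composition of α with the inclusion g ↦ (g, 0)) is injective. Then α is injective. -/
/-!
If `α (g, k) = 1`, then conjugating `(h, 0)` by `(g, k)` gives `(g φᵏ(h) g⁻¹, 0)`, which `α` maps to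
`α (h, 0)`. Injectivity on `G` turns this into `φᵏ(h) = g⁻¹ h g` for all `h`, so `φᵏ` is inner and
hence `k = 0`; then `(g, 0)` lies in the kernel of `α` restricted to `G`, so `g = 1`.
-/

namespace SemidirectProduct

variable {N H : Type*} [Group N] [Group H] {φ : H →* MulAut N}

theorem mul_inl_mul_inv (x : N ⋊[φ] H) (n : N) :
    x * inl n * x⁻¹ = inl (x.left * φ x.right n * x.left⁻¹) := by
  ext <;> simp [mul_assoc]

theorem apply_right_eq_conj_of_map_eq_one {F : Type*} [Group F] {α : N ⋊[φ] H →* F}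
    (hinj : Function.Injective (α.comp inl)) {x : N ⋊[φ] H} (hx : α x = 1) (n : N) :
    φ x.right n = x.left⁻¹ * n * x.left := by
  have hconj : α (inl (x.left * φ x.right n * x.left⁻¹)) = α (inl n) := by
    rw [← mul_inl_mul_inv, map_mul, map_mul, map_inv, hx]
    simp
  have hfix : x.left * φ x.right n * x.left⁻¹ = n := hinj hconj
  calc φ x.right n = x.left⁻¹ * (x.left * φ x.right n * x.left⁻¹) * x.left := by group
    _ = x.left⁻¹ * n * x.left := by rw [hfix]

end SemidirectProduct

open SemidirectProduct in
theorem stmt13 (G : Type*) [Group G] (φ : MulAut G)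
    (F : Type*) [Group F]
    (α : G ⋊[zpowersHom (MulAut G) φ] Multiplicative ℤ →* F)
    (hnoninner : ∀ k : ℤ, k ≠ 0 → ¬ ∃ ω : G, ∀ h : G, (φ ^ k) h = ω⁻¹ * h * ω)
    (hinj : Function.Injective (α.comp SemidirectProduct.inl)) :
    Function.Injective α := by
  rw [injective_iff_map_eq_one]
  intro x hx
  have hright : x.right = 1 := by
    by_contra hk
    exact hnoninner x.right.toAdd (by simpa using hk)
      ⟨x.left, apply_right_eq_conj_of_map_eq_one hinj hx⟩
  have hx_inl : x = inl x.left := by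
    ext
    · rfl
    · exact hright
  have hleft : x.left = 1 :=
    (injective_iff_map_eq_one _).mp hinj x.left (by rw [MonoidHom.comp_apply, ← hx_inl, hx])
  rw [hx_inl, hleft, map_one]
end

section
/- Let H_∞ be the group presented by generators a_i (i ∈ ℤ) and relations a_{i+1}⁻¹ a_i a_{i+1} = a_i² for all i ∈ ℤ, and let φ be the automorphism of H_∞ determined by φ(a_i) = a_{i+1} for all i. Then for every nonzero k ∈ ℤ, the automorphism φ^k is not inner: there is no ω ∈ H_∞ such that φ^k(h) = ω⁻¹hω for all h ∈ H_∞. -/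
/-- Relators of `H_∞ = ⟨aᵢ (i ∈ ℤ) | a_{i+1}⁻¹ aᵢ a_{i+1} = aᵢ²⟩`. -/
def HinfRels : Set (FreeGroup ℤ) :=
  Set.range fun i : ℤ =>
    (FreeGroup.of (i + 1))⁻¹ * FreeGroup.of i * FreeGroup.of (i + 1) *
      (FreeGroup.of i * FreeGroup.of i)⁻¹

/-- The group `H_∞`. -/
abbrev Hinf : Type := PresentedGroup HinfRels

/-!
The family `aᵢ ↦ 1` for `i ≤ m` extends to a homomorphism `H_∞ → Perm ℚ` that is nontrivial on
every `aᵢ` with `i > m`: above the threshold the images form a chain `g₀, g₁, …` with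
`g_{n+1}⁻¹ gₙ g_{n+1} = gₙ²`. If `φ^k` were inner then `a_k` would be conjugate to `a₀`, and the
threshold `m = min 0 k` separates them.

The chain exists because `x ↦ x / 2` conjugates `x ↦ x + 1` to its square and is itself a copy
of `x ↦ x + 1` on `ℚ ∖ {0}` (its orbits `2^ℤ u`, `u` a `2`-adic unit, are matched with the orbits
`q + ℤ`, `q ∈ [0, 1)`), so the construction can be repeated on the support of each new element.
-/

open Function

namespace Equiv.Perm

variable {α β γ : Type*}

theorem eq_viaEmbedding {e : Perm α} {ι : α ↪ β} {f : Perm β} (himage : ∀ x, f (ι x) = ι (e x))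
    (hfix : ∀ y ∉ Set.range ι, f y = y) : f = e.viaEmbedding ι := by
  ext y
  by_cases hy : y ∈ Set.range ι
  · obtain ⟨x, rfl⟩ := hy
    rw [himage, viaEmbedding_apply]
  · rw [hfix y hy, viaEmbedding_apply_of_notMem _ _ _ hy]

theorem viaEmbedding_refl (e : Perm α) : e.viaEmbedding (Embedding.refl α) = e :=
  (eq_viaEmbedding (fun _ => rfl) fun y hy => absurd ⟨y, rfl⟩ hy).symm

theorem viaEmbedding_viaEmbedding (e : Perm α) (κ : α ↪ β) (ι : β ↪ γ) :
    (e.viaEmbedding κ).viaEmbedding ι = e.viaEmbedding (κ.trans ι) := by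
  refine eq_viaEmbedding (fun x => ?_) fun y hy => ?_
  · simp only [Embedding.trans_apply, viaEmbedding_apply]
  · by_cases hyι : y ∈ Set.range ι
    · obtain ⟨z, rfl⟩ := hyι
      have hz : z ∉ Set.range κ := fun ⟨x, hx⟩ => hy ⟨x, by simp [hx]⟩
      rw [viaEmbedding_apply, viaEmbedding_apply_of_notMem _ _ _ hz]
    · exact viaEmbedding_apply_of_notMem _ _ _ hyι

end Equiv.Perm

theorem exists_seq_inv_mul_mul_eq_mul_self {G : Type*} [Group G] {P : G → Prop}
    (step : ∀ f, P f → ∃ s, P s ∧ s⁻¹ * f * s = f * f) {f₀ : G} (h₀ : P f₀) :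
    ∃ g : ℕ → G, (∀ n, P (g n)) ∧ ∀ n, (g (n + 1))⁻¹ * g n * g (n + 1) = g n * g n := by
  choose! s hsP hs using step
  have hP : ∀ n, P (s^[n] f₀) := fun n => by
    induction n with
    | zero => exact h₀
    | succ n ih => rw [iterate_succ_apply']; exact hsP _ ih
  exact ⟨fun n => s^[n] f₀, hP, fun n => by simp only [iterate_succ_apply']; exact hs _ (hP n)⟩

namespace Rat

def twoAdicUnits : Set ℚ := {u | u ≠ 0 ∧ padicValRat 2 u = 0}

theorem twoAdicUnits_infinite : twoAdicUnits.Infinite := by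
  refine Set.infinite_of_injective_forall_mem (f := fun n : ℕ => ((2 * n + 1 : ℕ) : ℚ))
    (fun a b h => by simpa using h) fun n => ⟨by positivity, ?_⟩
  rw [padicValRat.of_nat, padicValNat.eq_zero_of_not_dvd (by omega), Nat.cast_zero]

theorem padicValRat_two_zpow_mul (n : ℤ) {u : ℚ} (hu : u ≠ 0) :
    padicValRat 2 (2 ^ n * u) = n + padicValRat 2 u := by
  have h2 : padicValRat 2 (2 : ℚ) = 1 := by simpa using padicValRat.self (p := 2) one_lt_two
  rw [padicValRat.mul (zpow_ne_zero _ two_ne_zero) hu, padicValRat.zpow, h2, mul_one]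

noncomputable def fractEquivTwoAdicUnits : Set.Ico (0 : ℚ) 1 ≃ twoAdicUnits :=
  haveI := (Set.Ico_infinite (zero_lt_one' ℚ)).to_subtype
  haveI := twoAdicUnits_infinite.to_subtype
  nonempty_equiv_of_countable.some

/-- Carries the orbit `q + ℤ` of `x ↦ x + 1`, `q ∈ [0, 1)`, onto the orbit `2^ℤ u` of
`x ↦ x / 2`, where `u` is the `2`-adic unit matched with `q`. -/
noncomputable def halvingChart (q : ℚ) : ℚ :=
  2 ^ (-⌊q⌋) * fractEquivTwoAdicUnits ⟨Int.fract q, Int.fract_nonneg q, Int.fract_lt_one q⟩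

theorem halvingChart_add_one (q : ℚ) : halvingChart (q + 1) = halvingChart q / 2 := by
  simp only [halvingChart, Int.floor_add_one, Int.fract_add_one, neg_add,
    zpow_add₀ (two_ne_zero' ℚ)]
  ring

theorem padicValRat_halvingChart (q : ℚ) : padicValRat 2 (halvingChart q) = -⌊q⌋ := by
  obtain ⟨hu, hv⟩ := (fractEquivTwoAdicUnits ⟨_, Int.fract_nonneg q, Int.fract_lt_one q⟩).2
  rw [halvingChart, padicValRat_two_zpow_mul _ hu, hv, add_zero]

theorem halvingChart_injective : Injective halvingChart := by
  intro q r h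
  have hfloor : ⌊q⌋ = ⌊r⌋ := by
    simpa [padicValRat_halvingChart] using congrArg (padicValRat 2) h
  have hfract : Int.fract q = Int.fract r := by
    rw [halvingChart, halvingChart, hfloor] at h
    exact congrArg Subtype.val <| fractEquivTwoAdicUnits.injective <|
      Subtype.ext (mul_left_cancel₀ (zpow_ne_zero _ two_ne_zero) h)
  rw [← Int.floor_add_fract q, ← Int.floor_add_fract r, hfloor, hfract]

theorem mem_range_halvingChart {x : ℚ} (hx : x ≠ 0) : x ∈ Set.range halvingChart := by
  set v := padicValRat 2 x
  have h2v : (2 : ℚ) ^ v ≠ 0 := zpow_ne_zero _ two_ne_zero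
  have hu : x / 2 ^ v ∈ twoAdicUnits := by
    refine ⟨div_ne_zero hx h2v, ?_⟩
    rw [div_eq_inv_mul, ← zpow_neg, padicValRat_two_zpow_mul _ hx, neg_add_cancel]
  set d := fractEquivTwoAdicUnits.symm ⟨_, hu⟩
  have hfloor : ⌊(-v : ℤ) + (d : ℚ)⌋ = -v := by
    rw [Int.floor_intCast_add, Int.floor_eq_zero_iff.2 d.2, add_zero]
  have hfract : (⟨Int.fract ((-v : ℤ) + (d : ℚ)), Int.fract_nonneg _, Int.fract_lt_one _⟩ :
      Set.Ico (0 : ℚ) 1) = d := by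
    ext1
    exact (Int.fract_intCast_add _ _).trans (Int.fract_eq_self.2 d.2)
  refine ⟨(-v : ℤ) + d, ?_⟩
  rw [halvingChart, hfloor, hfract, Equiv.apply_symm_apply, neg_neg, mul_div_cancel₀ _ h2v]

end Rat

open Equiv Equiv.Perm Rat

theorem divRight₀_two_eq_viaEmbedding :
    Equiv.divRight₀ (2 : ℚ) two_ne_zero =
      (Equiv.addRight 1).viaEmbedding ⟨halvingChart, halvingChart_injective⟩ := by
  refine eq_viaEmbedding (fun q => (halvingChart_add_one q).symm) fun x hx => ?_
  obtain rfl : x = 0 := not_not.1 (mt mem_range_halvingChart hx)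
  exact zero_div 2

theorem divRight₀_two_inv_mul_addRight_one_mul :
    (Equiv.divRight₀ (2 : ℚ) two_ne_zero)⁻¹ * Equiv.addRight 1 * Equiv.divRight₀ 2 two_ne_zero =
      Equiv.addRight 1 * Equiv.addRight 1 := by
  ext x
  simp only [Perm.mul_apply, Perm.inv_def, divRight₀_apply, divRight₀_symm_apply, coe_addRight]
  ring

def IsEmbeddedTranslation (f : Perm ℚ) : Prop :=
  ∃ ι : ℚ ↪ ℚ, (Equiv.addRight 1).viaEmbedding ι = f

theorem isEmbeddedTranslation_addRight_one : IsEmbeddedTranslation (Equiv.addRight 1) :=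
  ⟨Function.Embedding.refl ℚ, viaEmbedding_refl _⟩

theorem IsEmbeddedTranslation.ne_one {f : Perm ℚ} (hf : IsEmbeddedTranslation f) : f ≠ 1 := by
  obtain ⟨ι, rfl⟩ := hf
  intro h
  have h0 := viaEmbedding_apply (Equiv.addRight (1 : ℚ)) ι 0
  rw [h, Perm.one_apply] at h0
  exact zero_ne_one (ι.injective h0 |>.trans (zero_add 1))

theorem IsEmbeddedTranslation.exists_inv_mul_mul_eq_mul_self {f : Perm ℚ}
    (hf : IsEmbeddedTranslation f) :
    ∃ s, IsEmbeddedTranslation s ∧ s⁻¹ * f * s = f * f := by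
  obtain ⟨ι, rfl⟩ := hf
  refine ⟨viaEmbeddingHom ι (Equiv.divRight₀ 2 two_ne_zero),
    ⟨(⟨halvingChart, halvingChart_injective⟩ : ℚ ↪ ℚ).trans ι, ?_⟩, ?_⟩
  · rw [viaEmbeddingHom_apply, divRight₀_two_eq_viaEmbedding, viaEmbedding_viaEmbedding]
  · simp only [← viaEmbeddingHom_apply, ← map_inv, ← map_mul,
      divRight₀_two_inv_mul_addRight_one_mul]

namespace Hinf

variable {G : Type*} [Group G]

def lift (g : ℤ → G) (hg : ∀ i, (g (i + 1))⁻¹ * g i * g (i + 1) = g i * g i) : Hinf →* G :=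
  PresentedGroup.toGroup (rels := HinfRels) (f := g) <| by
    rintro _ ⟨i, rfl⟩
    simp only [map_mul, map_inv, FreeGroup.lift_apply_of, mul_inv_eq_one, hg]

theorem lift_of (g : ℤ → G) (hg : ∀ i, (g (i + 1))⁻¹ * g i * g (i + 1) = g i * g i) (i : ℤ) :
    lift g hg (PresentedGroup.of i) = g i :=
  PresentedGroup.toGroup.of _

theorem exists_hom_eq_one_iff_le {g : ℕ → G} (hg₁ : ∀ n, g n ≠ 1)
    (hg : ∀ n, (g (n + 1))⁻¹ * g n * g (n + 1) = g n * g n) (m : ℤ) :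
    ∃ ρ : Hinf →* G, ∀ i, ρ (PresentedGroup.of i) = 1 ↔ i ≤ m := by
  set g' : ℤ → G := fun i => if i ≤ m then 1 else g (i - m - 1).toNat
  have hg' : ∀ i, (g' (i + 1))⁻¹ * g' i * g' (i + 1) = g' i * g' i := by
    intro i
    rcases lt_trichotomy i m with h | rfl | h
    · simp [g', h.le, Int.add_one_le_of_lt h]
    · simp [g']
    · have hnext : (i + 1 - m - 1).toNat = (i - m - 1).toNat + 1 := by omega
      simp only [g', if_neg h.not_ge, if_neg (show ¬ i + 1 ≤ m by omega), hnext]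
      exact hg _
  refine ⟨lift g' hg', fun i => ?_⟩
  rw [lift_of]
  by_cases h : i ≤ m <;> simp [g', h, hg₁]

theorem zpow_apply_of {φ : MulAut Hinf}
    (hφ : ∀ i, φ (PresentedGroup.of i) = PresentedGroup.of (i + 1)) (k i : ℤ) :
    (φ ^ k) (PresentedGroup.of i) = (PresentedGroup.of (i + k) : Hinf) := by
  induction k using Int.induction_on generalizing i with
  | zero => simp
  | succ n ih => rw [zpow_add_one, MulAut.mul_apply, hφ, ih, add_right_comm, add_assoc]
  | pred n ih =>
    have hinv : φ⁻¹ (PresentedGroup.of i) = PresentedGroup.of (i - 1) :=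
      (φ.symm_apply_eq).2 (by rw [hφ, sub_add_cancel])
    rw [zpow_sub_one, MulAut.mul_apply, hinv, ih, sub_add_eq_add_sub, add_sub_assoc]

theorem exists_perm_hom_eq_one_iff_le (m : ℤ) :
    ∃ ρ : Hinf →* Perm ℚ, ∀ i, ρ (PresentedGroup.of i) = 1 ↔ i ≤ m := by
  obtain ⟨g, hgP, hg⟩ := exists_seq_inv_mul_mul_eq_mul_self
    (fun _ hf => hf.exists_inv_mul_mul_eq_mul_self) isEmbeddedTranslation_addRight_one
  exact exists_hom_eq_one_iff_le (fun n => (hgP n).ne_one) hg m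

end Hinf

theorem stmt14 (φ : MulAut Hinf)
    (hφ : ∀ i : ℤ, φ (PresentedGroup.of (rels := HinfRels) i) =
      PresentedGroup.of (rels := HinfRels) (i + 1)) :
    ∀ k : ℤ, k ≠ 0 → ¬ ∃ ω : Hinf, ∀ h : Hinf, (φ ^ k) h = ω⁻¹ * h * ω := by
  rintro k hk ⟨ω, hω⟩
  have hconj : (PresentedGroup.of k : Hinf) = ω⁻¹ * PresentedGroup.of 0 * ω := by
    rw [← hω, Hinf.zpow_apply_of hφ, zero_add]
  obtain ⟨ρ, hρ⟩ := Hinf.exists_perm_hom_eq_one_iff_le (min 0 k)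
  have hiff : ρ (PresentedGroup.of k) = 1 ↔ ρ (PresentedGroup.of 0) = 1 := by
    rw [hconj, map_mul, map_mul, map_inv]
    simpa only [inv_inv] using conj_eq_one_iff (a := (ρ ω)⁻¹)
  rw [hρ, hρ] at hiff
  omega
end

section
/- Let p be a prime, n = 2^p − 1, ω = exp(2πi/n), and D ∈ Mₙ(ℂ) the diagonal matrix with diagonal entries ω⁰, ω¹, …, ω^{n−1}. Then there exists a permutation σ of {0, 1, …, n−1} whose permutation matrix T (a unitary matrix) satisfies T⁻¹ D T = D², and the characteristic polynomial of T equals (X − 1) · (X^p − 1)^{(n−1)/p}; in particular the spectrum of T consists of every p-th root of unity with multiplicity (2^p − 2)/p, together with an additional eigenvalue 1 of multiplicity 1. -/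
open Polynomial

/-- The diagonal matrix `D = diag(ω⁰, ω¹, …, ω^{n-1})` with `ω = exp(2πi/n)`. -/
noncomputable def Dmat (n : ℕ) : Matrix (Fin n) (Fin n) ℂ :=
  Matrix.diagonal fun k : Fin n =>
    Complex.exp (2 * Real.pi * Complex.I / n) ^ (k : ℕ)

/-- The permutation matrix of `σ`: the matrix `T` with `T (σ k) k = 1` and all other
entries `0`. -/
def permMatC {n : ℕ} (σ : Equiv.Perm (Fin n)) : Matrix (Fin n) (Fin n) ℂ :=
  Matrix.of fun i k => if i = σ k then 1 else 0

/-!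
`T` is the permutation matrix of `k ↦ 2k` on `ℤ/(2^p - 1)`, and conjugating a diagonal matrix by
it permutes the diagonal, which turns `ωᵏ` into `ω²ᵏ`. Since `2^p ≡ 1`, this permutation has
order `p`; as `2 - 1` is a unit, `0` is its only fixed point, so all other orbits have length `p`.
Ordering the basis orbit by orbit makes a permutation matrix block diagonal with cyclic shifts as
blocks, and the cyclic shift of length `L` has characteristic polynomial `X^L - 1`.
-/

open Equiv MulAction Subgroup Function

lemma ZMod.finEquiv_apply {n : ℕ} [NeZero n] (k : Fin n) : ZMod.finEquiv n k = (k : ℕ) := by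
  obtain ⟨m, rfl⟩ := Nat.exists_eq_succ_of_ne_zero (NeZero.ne n)
  exact (Fin.cast_val_eq_self k).symm

namespace Matrix

variable {α β R : Type*} [DecidableEq α] [DecidableEq β]

lemma reindex_permMatrix [Zero R] [One R] (e : α ≃ β) (σ : Perm α) :
    reindex e e (σ.permMatrix R) = (e.permCongr σ).permMatrix R := by
  ext i j
  simp [PEquiv.toMatrix_apply, Equiv.permCongr_apply, Equiv.eq_symm_apply]

lemma charpoly_permMatrix_permCongr [Fintype α] [Fintype β] [CommRing R] (e : α ≃ β)
    (σ : Perm α) : ((e.permCongr σ).permMatrix R).charpoly = (σ.permMatrix R).charpoly := by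
  rw [← reindex_permMatrix, charpoly_reindex]

lemma permMatrix_mem_unitaryGroup [Fintype α] [CommRing R] [StarRing R] (σ : Perm α) :
    σ.permMatrix R ∈ unitaryGroup α R := by
  rw [mem_unitaryGroup_iff, star_eq_conjTranspose, conjTranspose_permMatrix, ← permMatrix_mul,
    inv_mul_cancel, permMatrix_one]

lemma inv_permMatrix_mul_diagonal_mul_permMatrix [Fintype α] [CommRing R] (d : α → R)
    (σ : Perm α) : (σ.permMatrix R)⁻¹ * diagonal d * σ.permMatrix R = diagonal (d ∘ σ.symm) := by
  have hinv : (σ.permMatrix R)⁻¹ = σ⁻¹.permMatrix R :=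
    inv_eq_left_inv (by rw [← permMatrix_mul, mul_inv_cancel, permMatrix_one])
  rw [hinv, PEquiv.toMatrix_toPEquiv_mul, PEquiv.mul_toMatrix_toPEquiv, submatrix_submatrix]
  exact submatrix_diagonal_equiv d σ.symm

lemma permMatrix_sigmaCongrRight {ι : Type*} [DecidableEq ι] {κ : ι → Type*}
    [∀ i, DecidableEq (κ i)] [Zero R] [One R] (τ : ∀ i, Perm (κ i)) :
    (Perm.sigmaCongrRight τ).permMatrix R = blockDiagonal' fun i => (τ i).permMatrix R := by
  ext ⟨i, x⟩ ⟨j, y⟩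
  by_cases h : i = j
  · subst h
    simp [PEquiv.toMatrix_apply, blockDiagonal'_apply_eq]
  · simp [PEquiv.toMatrix_apply, blockDiagonal'_apply_ne _ _ _ h, h]

lemma charpoly_blockDiagonal' {ι : Type*} [Fintype ι] [DecidableEq ι] {κ : ι → Type*}
    [∀ i, Fintype (κ i)] [∀ i, DecidableEq (κ i)] [CommRing R] (M : ∀ i, Matrix (κ i) (κ i) R) :
    (blockDiagonal' M).charpoly = ∏ i, (M i).charpoly := by
  -- any linear order on the blocks will do; its decidable equality is made the given one
  let : LinearOrder ι := LinearOrder.lift' (Fintype.equivFin ι) (Fintype.equivFin ι).injective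
  obtain rfl : ‹DecidableEq ι› = LinearOrder.toDecidableEq := Subsingleton.elim _ _
  rw [(blockTriangular_blockDiagonal' M).charpoly]
  refine (Finset.prod_congr rfl fun i _ => ?_).trans
    (Finset.prod_subset (Finset.subset_univ _) fun i _ hi => ?_)
  · rw [← charpoly_reindex (sigmaSubtype i)]
    congr 1
    ext x y
    exact blockDiagonal'_apply_eq M i x y
  · have : IsEmpty (κ i) := ⟨fun x => hi (Finset.mem_image.mpr ⟨⟨i, x⟩, Finset.mem_univ _, rfl⟩)⟩
    exact charpoly_isEmpty

/-- The cyclic shift is the matrix of multiplication by `X` on `K[X] ⧸ (X ^ L - 1)` in the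
basis `1, X, …, X ^ (L - 1)`, so its characteristic polynomial is the minimal polynomial of `X`. -/
lemma charpoly_permMatrix_addRight_one {K : Type*} [Field K] (L : ℕ) [NeZero L] :
    ((Equiv.addRight (1 : ZMod L)).permMatrix K).charpoly = X ^ L - 1 := by
  obtain ⟨k, rfl⟩ := Nat.exists_eq_succ_of_ne_zero (NeZero.ne L)
  have hg : (X ^ (k + 1) - C (1 : K)).Monic := monic_X_pow_sub_C _ k.succ_ne_zero
  have := hg.finite_adjoinRoot
  set pb := AdjoinRoot.powerBasis' hg
  have hdim : pb.dim = k + 1 := natDegree_X_pow_sub_C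
  let e : Fin pb.dim ≃ ZMod (k + 1) := finCongr hdim
  have hroot : AdjoinRoot.root (X ^ (k + 1) - C (1 : K)) ^ (k + 1) = 1 := by
    have := AdjoinRoot.mk_self (f := X ^ (k + 1) - C (1 : K))
    rwa [map_sub, map_pow, AdjoinRoot.mk_X, AdjoinRoot.mk_C, map_one, sub_eq_zero] at this
  have hb (i : ZMod (k + 1)) :
      pb.basis.reindex e i = AdjoinRoot.root (X ^ (k + 1) - C (1 : K)) ^ i.val := by
    rw [Module.Basis.reindex_apply, PowerBasis.basis_eq_pow, AdjoinRoot.powerBasis'_gen]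
    rfl
  set b := pb.basis.reindex e
  have hmat : Algebra.leftMulMatrix b pb.gen =
      ((Equiv.addRight (1 : ZMod (k + 1))).permMatrix K)ᵀ := by
    ext i j
    have hshift : AdjoinRoot.root (X ^ (k + 1) - C (1 : K)) ^ (j.val + 1) = b (j + 1) := by
      rw [hb, ZMod.val_add, ZMod.val_one_eq_one_mod, Nat.add_mod_mod, ← pow_eq_pow_mod _ hroot]
    rw [Algebra.leftMulMatrix_apply, LinearMap.toMatrix_apply, Algebra.coe_lmul_eq_mul,
      LinearMap.mul_apply', hb, AdjoinRoot.powerBasis'_gen, ← pow_succ', hshift,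
      Module.Basis.repr_self]
    simp [Finsupp.single_apply, PEquiv.toMatrix_apply]
  rw [← charpoly_transpose, ← hmat, Algebra.leftMulMatrix_apply, LinearMap.charpoly_toMatrix,
    ← LinearMap.charpoly_toMatrix _ pb.basis, ← Algebra.leftMulMatrix_apply,
    charpoly_leftMulMatrix, AdjoinRoot.powerBasis'_gen, AdjoinRoot.minpoly_root hg.ne_zero,
    hg.leadingCoeff]
  simp

end Matrix

namespace Equiv.Perm

variable {α : Type*}

noncomputable def orbitsZModEquiv (σ : Perm α) :
    α ≃ Σ ω : orbitRel.Quotient (zpowers σ) α, ZMod (minimalPeriod (σ • ·) ω.out) :=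
  (selfEquivSigmaOrbits (zpowers σ) α).trans
    (Equiv.sigmaCongrRight fun ω => orbitZPowersEquiv σ ω.out)

lemma orbitsZModEquiv_symm_add_one (σ : Perm α) (ω : orbitRel.Quotient (zpowers σ) α)
    (k : ZMod (minimalPeriod (σ • ·) ω.out)) :
    (orbitsZModEquiv σ).symm ⟨ω, k + 1⟩ = σ ((orbitsZModEquiv σ).symm ⟨ω, k⟩) := by
  obtain ⟨z, rfl⟩ := ZMod.intCast_surjective k
  rw [← Int.cast_one, ← Int.cast_add]
  simp only [orbitsZModEquiv, symm_trans_apply, Equiv.sigmaCongrRight_symm,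
    Equiv.sigmaCongrRight_apply, orbitZPowersEquiv_symm_apply']
  rw [add_comm, zpow_one_add, mul_smul]
  rfl

lemma orbitsZModEquiv_permCongr (σ : Perm α) :
    (orbitsZModEquiv σ).permCongr σ = sigmaCongrRight fun _ => Equiv.addRight 1 := by
  ext1 y
  rw [permCongr_apply, ← (orbitsZModEquiv σ).eq_symm_apply]
  exact (orbitsZModEquiv_symm_add_one σ y.1 y.2).symm

lemma minimalPeriod_of_pow_prime_eq_one [DecidableEq α] {p : ℕ} [Fact p.Prime] {σ : Perm α}
    (hσ : σ ^ p = 1) (x : α) : minimalPeriod σ x = if σ x = x then 1 else p := by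
  split_ifs with h
  · exact minimalPeriod_eq_one_iff_isFixedPt.mpr h
  · refine minimalPeriod_eq_prime ?_ h
    rw [IsPeriodicPt, IsFixedPt, ← coe_pow, hσ, one_apply]

variable [Fintype α]

lemma card_eq_sum_minimalPeriod (σ : Perm α) [Fintype (orbitRel.Quotient (zpowers σ) α)] :
    Fintype.card α = ∑ ω : orbitRel.Quotient (zpowers σ) α, minimalPeriod σ ω.out := by
  rw [Fintype.card_congr (orbitsZModEquiv σ), Fintype.card_sigma]
  simp only [ZMod.card]
  rfl

lemma charpoly_permMatrix_eq_prod_orbits [DecidableEq α] {K : Type*} [Field K] (σ : Perm α)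
    [Fintype (orbitRel.Quotient (zpowers σ) α)] :
    (σ.permMatrix K).charpoly =
      ∏ ω : orbitRel.Quotient (zpowers σ) α, (X ^ minimalPeriod σ ω.out - 1) := by
  classical
  rw [← Matrix.charpoly_permMatrix_permCongr (orbitsZModEquiv σ), orbitsZModEquiv_permCongr,
    Matrix.permMatrix_sigmaCongrRight, Matrix.charpoly_blockDiagonal']
  exact Finset.prod_congr rfl fun ω _ => Matrix.charpoly_permMatrix_addRight_one _

lemma charpoly_permMatrix_of_pow_prime_eq_one [DecidableEq α] {K : Type*} [Field K]
    {p : ℕ} [hp : Fact p.Prime] {σ : Perm α} (hσ : σ ^ p = 1) {a : α}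
    (hfix : ∀ x, σ x = x ↔ x = a) :
    (σ.permMatrix K).charpoly = (X - 1) * (X ^ p - 1) ^ ((Fintype.card α - 1) / p) := by
  classical
  let := Fintype.ofFinite (orbitRel.Quotient (zpowers σ) α)
  let ω₀ : orbitRel.Quotient (zpowers σ) α := Quotient.mk'' a
  have hout (ω : orbitRel.Quotient (zpowers σ) α) : ω.out = a ↔ ω = ω₀ := by
    refine ⟨fun h => by rw [← ω.out_eq, h], ?_⟩
    rintro rfl
    obtain ⟨⟨_, k, rfl⟩, hk⟩ := Quotient.mk_out (s := orbitRel (zpowers σ) α) a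
    rw [← hk]
    exact zpow_apply_eq_self_of_apply_eq_self ((hfix a).2 rfl) k
  have hperiod (ω : orbitRel.Quotient (zpowers σ) α) :
      minimalPeriod σ ω.out = if ω = ω₀ then 1 else p := by
    simp only [minimalPeriod_of_pow_prime_eq_one hσ, hfix, hout]
  have hrest (ω) (hω : ω ∈ ({ω₀}ᶜ : Finset _)) : minimalPeriod σ ω.out = p := by
    rw [hperiod, if_neg (by simpa using hω)]
  have hcard : Fintype.card α = 1 + ({ω₀}ᶜ : Finset _).card * p := by
    rw [card_eq_sum_minimalPeriod σ, Fintype.sum_eq_add_sum_compl ω₀, hperiod, if_pos rfl,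
      Finset.sum_congr rfl hrest, Finset.sum_const, smul_eq_mul]
  rw [charpoly_permMatrix_eq_prod_orbits, Fintype.prod_eq_mul_prod_compl ω₀, hperiod, if_pos rfl,
    pow_one, Finset.prod_congr rfl fun ω hω => by rw [hrest ω hω], Finset.prod_const, hcard,
    Nat.add_sub_cancel_left, Nat.mul_div_cancel _ hp.out.pos]

lemma charpoly_permMatrix_toPerm_of_isUnit_sub_one {A : Type*} [Ring A] [Fintype A]
    [DecidableEq A] {K : Type*} [Field K] {p : ℕ} [Fact p.Prime] {u : Aˣ} (hu : u ^ p = 1)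
    (hu1 : IsUnit ((u : A) - 1)) :
    ((toPerm u : Perm A).permMatrix K).charpoly =
      (X - 1) * (X ^ p - 1) ^ ((Fintype.card A - 1) / p) := by
  refine charpoly_permMatrix_of_pow_prime_eq_one (a := 0) ?_ fun x => ?_
  · change toPermHom Aˣ A u ^ p = 1
    rw [← map_pow, hu, map_one]
  · rw [toPerm_apply, Units.smul_def, smul_eq_mul, ← sub_eq_zero, ← sub_one_mul,
      hu1.mul_right_eq_zero]

end Equiv.Perm

lemma permMatC_eq_permMatrix_inv {n : ℕ} (σ : Perm (Fin n)) :
    permMatC σ = σ⁻¹.permMatrix ℂ := by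
  ext i k
  simp only [permMatC, Matrix.of_apply, PEquiv.toMatrix_apply, toPEquiv_apply, Option.mem_def,
    Option.some_inj]
  exact if_congr Perm.inv_eq_iff_eq.symm rfl rfl

instance {p : ℕ} [NeZero p] : NeZero (2 ^ p - 1) :=
  ⟨Nat.sub_ne_zero_of_lt (Nat.one_lt_two_pow (NeZero.ne p))⟩

lemma inv_permMatC_mul_Dmat_mul_permMatC {n : ℕ} [NeZero n] {σ : Perm (Fin n)}
    (hσ : ∀ k : Fin n, ((σ k : ℕ) : ZMod n) = 2 * (k : ℕ)) :
    (permMatC σ)⁻¹ * Dmat n * permMatC σ = Dmat n ^ 2 := by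
  rw [permMatC_eq_permMatrix_inv, Dmat, Matrix.inv_permMatrix_mul_diagonal_mul_permMatrix,
    Matrix.diagonal_pow]
  congr 1
  ext k
  have hω := (Complex.isPrimitiveRoot_exp n (NeZero.ne n)).pow_eq_one
  have hk : (σ k : ℕ) % n = (k * 2) % n := by
    rw [← ZMod.natCast_eq_natCast_iff', hσ, Nat.cast_mul, mul_comm, Nat.cast_two]
  rw [Function.comp_apply, Perm.inv_def, symm_symm, Pi.pow_apply, ← pow_mul,
    pow_eq_pow_mod _ hω, hk, ← pow_eq_pow_mod _ hω]

lemma exists_doubling_perm_charpoly_eq {p : ℕ} (hp : p.Prime) :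
    ∃ σ : Perm (Fin (2 ^ p - 1)),
      (∀ k : Fin (2 ^ p - 1), ((σ k : ℕ) : ZMod (2 ^ p - 1)) = 2 * (k : ℕ)) ∧
      (σ.permMatrix ℂ).charpoly = (X - 1) * (X ^ p - 1) ^ ((2 ^ p - 2) / p) := by
  have := Fact.mk hp
  have h2 : (2 : ZMod (2 ^ p - 1)) ^ p = 1 := by
    have := ZMod.natCast_self (2 ^ p - 1)
    rw [Nat.cast_sub Nat.one_le_two_pow] at this
    push_cast at this
    exact sub_eq_zero.mp this
  let u : (ZMod (2 ^ p - 1))ˣ := Units.ofPowEqOne 2 p h2 hp.ne_zero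
  let e : ZMod (2 ^ p - 1) ≃ Fin (2 ^ p - 1) := (ZMod.finEquiv _).toEquiv.symm
  refine ⟨e.permCongr (toPerm u), fun k => ?_, ?_⟩
  · rw [← ZMod.finEquiv_apply, ← ZMod.finEquiv_apply]
    simp [e, u, Units.smul_def]
  · rw [Matrix.charpoly_permMatrix_permCongr,
      Perm.charpoly_permMatrix_toPerm_of_isUnit_sub_one (Units.pow_ofPowEqOne _ _), ZMod.card]
    · rw [Nat.sub_sub]
    · rw [Units.val_ofPowEqOne, show (2 : ZMod (2 ^ p - 1)) - 1 = 1 by norm_num]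
      exact isUnit_one

theorem stmt16 (p : ℕ) (hp : p.Prime) :
    ∃ σ : Equiv.Perm (Fin (2 ^ p - 1)),
      permMatC σ ∈ Matrix.unitaryGroup (Fin (2 ^ p - 1)) ℂ ∧
      (permMatC σ)⁻¹ * Dmat (2 ^ p - 1) * permMatC σ = Dmat (2 ^ p - 1) ^ 2 ∧
      (permMatC σ).charpoly =
        (X - 1) * (X ^ p - 1) ^ ((2 ^ p - 2) / p) := by
  have : NeZero p := ⟨hp.ne_zero⟩
  obtain ⟨σ, hσ, hchar⟩ := exists_doubling_perm_charpoly_eq hp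
  refine ⟨σ, ?_, inv_permMatC_mul_Dmat_mul_permMatC hσ, ?_⟩
  · rw [permMatC_eq_permMatrix_inv]
    exact Matrix.permMatrix_mem_unitaryGroup _
  · rw [permMatC_eq_permMatrix_inv, ← Matrix.charpoly_transpose, Matrix.transpose_permMatrix,
      inv_inv, hchar]
end

section
/- Let p be a prime and n = 2^p − 1. Then for every nonzero x ∈ ℤ/nℤ, the least positive integer k with 2^k · x = x in ℤ/nℤ is exactly p; equivalently, the orbit of any nonzero x under the map y ↦ 2y on ℤ/nℤ has exactly p elements, while 0 is a fixed point. -/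
/-!
Since `2 ^ p = 1` in `ZMod (2 ^ p - 1)`, every `x` is a periodic point of `y ↦ 2 * y` with period
dividing the prime `p`; and `x ≠ 0` is not a fixed point, as `2 * x = x` forces `x = 0`. So the
minimal period of `x` is `p`, and the orbit of a periodic point has as many elements as its
minimal period.
-/

open Function

namespace Function

variable {α : Type*} {f : α → α} {x : α}

theorem isLeast_minimalPeriod (hx : x ∈ periodicPts f) :
    IsLeast {k | 0 < k ∧ f^[k] x = x} (minimalPeriod f x) :=
  ⟨⟨minimalPeriod_pos_of_mem_periodicPts hx, isPeriodicPt_minimalPeriod f x⟩,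
    fun _ ⟨hk, hkx⟩ => IsPeriodicPt.minimalPeriod_le hk hkx⟩

theorem range_iterate_eq_image_Iio_minimalPeriod (hx : x ∈ periodicPts f) :
    Set.range (f^[·] x) = (f^[·] x) '' Set.Iio (minimalPeriod f x) := by
  ext y
  constructor
  · rintro ⟨k, rfl⟩
    exact ⟨k % minimalPeriod f x, Nat.mod_lt _ (minimalPeriod_pos_of_mem_periodicPts hx),
      iterate_mod_minimalPeriod_eq⟩
  · rintro ⟨k, -, rfl⟩
    exact ⟨k, rfl⟩

theorem ncard_range_iterate (hx : x ∈ periodicPts f) :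
    (Set.range (f^[·] x)).ncard = minimalPeriod f x := by
  rw [range_iterate_eq_image_Iio_minimalPeriod hx, iterate_injOn_Iio_minimalPeriod.ncard_image,
    Set.ncard_Iio_nat]

end Function

theorem ZMod.two_pow_eq_one (p : ℕ) : (2 : ZMod (2 ^ p - 1)) ^ p = 1 := by
  have h := ZMod.natCast_self (2 ^ p - 1)
  push_cast [Nat.cast_sub Nat.one_le_two_pow] at h
  linear_combination h

theorem ZMod.minimalPeriod_two_mul_mersenne {p : ℕ} (hp : p.Prime) {x : ZMod (2 ^ p - 1)}
    (hx : x ≠ 0) : minimalPeriod (2 * ·) x = p := by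
  have := Fact.mk hp
  refine minimalPeriod_eq_prime ?_ fun hfix => hx ?_
  · simp only [IsPeriodicPt, IsFixedPt, mul_left_iterate, ZMod.two_pow_eq_one, one_mul]
  · have h : 2 * x = x := hfix
    linear_combination h

theorem stmt17 (p : ℕ) (hp : p.Prime) :
    (∀ x : ZMod (2 ^ p - 1), x ≠ 0 →
      IsLeast {k : ℕ | 0 < k ∧ (2 : ZMod (2 ^ p - 1)) ^ k * x = x} p ∧
      Set.ncard {y : ZMod (2 ^ p - 1) | ∃ k : ℕ, y = (2 : ZMod (2 ^ p - 1)) ^ k * x} = p) ∧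
    (2 : ZMod (2 ^ p - 1)) * 0 = 0 := by
  refine ⟨fun x hx => ?_, mul_zero 2⟩
  have hperiod := ZMod.minimalPeriod_two_mul_mersenne hp hx
  have hx_periodic : x ∈ periodicPts (2 * ·) :=
    minimalPeriod_pos_iff_mem_periodicPts.mp (hperiod.symm ▸ hp.pos)
  have horbit :
      {y | ∃ k : ℕ, y = (2 : ZMod (2 ^ p - 1)) ^ k * x} = Set.range ((2 * ·)^[·] x) := by
    ext y
    simp only [mul_left_iterate, Set.mem_range, eq_comm, Set.mem_ofPred_eq]
  refine ⟨?_, ?_⟩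
  · simpa only [hperiod, mul_left_iterate] using isLeast_minimalPeriod hx_periodic
  · rw [horbit, ncard_range_iterate hx_periodic, hperiod]
end

section
/- Let 0 < ε ≤ 1/5, let k = ⌊1/ε⌋, and let u ∈ U(n) for some n. Then there exist unitary matrices u_{−k}, u_{−k+1}, …, u_k ∈ U(n) such that: (1) u₀ = 1; (2) ‖u_i − u_{i+1}‖ < 4ε for every i with −k ≤ i < k; and (3) u = u_{−k} · u_k⁻¹. -/
open Complex Real

lemma Complex.exp_I_mul_arg_div_pow {z : ℂ} (hz : ‖z‖ = 1) {m : ℕ} (hm : m ≠ 0) :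
    exp (I * ↑(arg z / m)) ^ m = z := by
  conv_rhs => rw [← norm_mul_exp_arg_mul_I z, hz]
  rw [← exp_nat_mul]
  push_cast
  field_simp

lemma Complex.norm_exp_I_mul_arg_div_sub_one_le (z : ℂ) (m : ℕ) :
    ‖exp (I * ↑(arg z / m)) - 1‖ ≤ π / m := by
  refine norm_exp_I_mul_ofReal_sub_one_le.trans ?_
  rw [norm_div, Real.norm_eq_abs, RCLike.norm_natCast]
  gcongr
  exact abs_arg_le_pi z

lemma CStarAlgebra.exists_unitary_pow_eq_norm_sub_one_le {A : Type*} [CStarAlgebra A] {u : A}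
    (hu : u ∈ unitary A) (hfin : (spectrum ℂ u).Finite) {m : ℕ} (hm : m ≠ 0) :
    ∃ w ∈ unitary A, w ^ m = u ∧ ‖w - 1‖ ≤ π / m := by
  have : IsStarNormal u := isStarNormal_of_mem_unitary hu
  have hσ : ∀ z ∈ spectrum ℂ u, ‖z‖ = 1 := fun z hz ↦ by
    simpa using spectrum.subset_circle_of_unitary hu hz
  set f : ℂ → ℂ := fun z ↦ exp (I * ↑(arg z / m))
  have hf : ContinuousOn f (spectrum ℂ u) := hfin.continuousOn f
  refine ⟨cfc f u, ?_, ?_, ?_⟩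
  · rw [cfc_unitary_iff f u]
    intro z _
    rw [RCLike.star_def, conj_mul', norm_exp_I_mul_ofReal]
    norm_num
  · rw [← cfc_pow f m u]
    conv_rhs => rw [← cfc_id' ℂ u]
    exact cfc_congr fun z hz ↦ exp_I_mul_arg_div_pow (hσ z hz) hm
  · rw [← cfc_one ℂ u, ← cfc_sub f 1 u]
    exact norm_cfc_le (by positivity) fun z _ ↦ norm_exp_I_mul_arg_div_sub_one_le z m

lemma CStarRing.norm_coe_zpow_add_one_sub_coe_zpow {E : Type*} [NormedRing E] [StarRing E]
    [CStarRing E] (w : unitary E) (i : ℤ) :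
    ‖((w ^ (i + 1) : unitary E) : E) - ↑(w ^ i)‖ = ‖(w : E) - 1‖ := by
  rw [zpow_add_one, MulMemClass.coe_mul, ← norm_coe_unitary_mul (w ^ i) ((w : E) - 1), mul_sub,
    mul_one]

lemma pi_div_two_mul_floor_one_div_lt {ε : ℝ} (hε : 0 < ε) : π / (2 * ⌊1 / ε⌋₊) < 4 * ε := by
  set k := ⌊1 / ε⌋₊
  -- for `k = 0` the left side is the junk value `π / 0 = 0`
  rcases Nat.eq_zero_or_pos k with hk | hk
  · simp [hk, hε]
  have hk' : (1 : ℝ) ≤ k := by exact_mod_cast hk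
  have hεk : 1 < (k + 1) * ε := by
    have := Nat.lt_floor_add_one (1 / ε)
    rwa [div_lt_iff₀ hε] at this
  rw [div_lt_iff₀ (by positivity)]
  nlinarith [pi_lt_four]

open scoped Matrix.Norms.L2Operator

theorem stmt18 (ε : ℝ) (hε : 0 < ε) (hε' : ε ≤ 1 / 5) (n : ℕ)
    (u : Matrix.unitaryGroup (Fin n) ℂ) :
    ∃ v : ℤ → Matrix.unitaryGroup (Fin n) ℂ,
      v 0 = 1 ∧
      (∀ i : ℤ, -(Nat.floor (1 / ε) : ℤ) ≤ i → i < (Nat.floor (1 / ε) : ℤ) →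
        matOpNorm ((v i : Matrix (Fin n) (Fin n) ℂ) -
          (v (i + 1) : Matrix (Fin n) (Fin n) ℂ)) < 4 * ε) ∧
      u = v (-(Nat.floor (1 / ε) : ℤ)) * (v (Nat.floor (1 / ε) : ℤ))⁻¹ := by
  set k := ⌊1 / ε⌋₊
  have hk : k ≠ 0 :=
    Nat.one_le_iff_ne_zero.mp <| (Nat.one_le_floor_iff _).mpr <| by rw [le_div_iff₀ hε]; linarith
  obtain ⟨w, hw, hpow, hnorm⟩ := CStarAlgebra.exists_unitary_pow_eq_norm_sub_one_le u.2
    (Matrix.finite_spectrum _) (m := 2 * k) (by positivity)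
  set W : Matrix.unitaryGroup (Fin n) ℂ := ⟨w, hw⟩
  refine ⟨fun i ↦ W ^ (-i), by simp, fun i _ _ ↦ ?_, ?_⟩
  · change ‖((W ^ (-i) : Matrix.unitaryGroup (Fin n) ℂ) : Matrix (Fin n) (Fin n) ℂ) -
      ↑(W ^ (-(i + 1)))‖ < 4 * ε
    rw [show -i = -(i + 1) + 1 by ring, CStarRing.norm_coe_zpow_add_one_sub_coe_zpow]
    calc ‖w - 1‖ ≤ π / ↑(2 * k) := hnorm
      _ < 4 * ε := by exact_mod_cast pi_div_two_mul_floor_one_div_lt hε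
  · apply Subtype.ext
    simp only [neg_neg, zpow_neg, inv_inv, zpow_natCast, ← pow_add, ← two_mul]
    exact hpow.symm
end
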